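/- arXiv:1105.0230 — 14 statements merged into one kernel-verified Lean document; each statement's English description precedes it below -/
import Mathlib

section
/- For every real number x > 1 and every a with 0 < a < 1, setting ζ = a/(1+a), one has sqrt((x + a*x^2)/(x + a)) > x^ζ. -/
/-!
Write `x = e^{(1+a)u}` with `u > 0`, so that `x^ζ = e^{au}`. Clearing denominators, the
inequality becomes `sinh (a u) < a sinh u`, which is strict convexity of `sinh` on `[0, ∞)`
between the points `0` and `u`.
-/

open Real Set

theorem Real.strictConvexOn_sinh : StrictConvexOn ℝ (Ici 0) sinh := by
  refine strictConvexOn_of_deriv2_pos (convex_Ici 0) continuous_sinh.continuousOn fun x hx => ?_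
  rw [interior_Ici] at hx
  simpa [Function.iterate_succ, deriv_sinh, deriv_cosh] using sinh_pos_iff.mpr hx

theorem Real.sinh_mul_lt_mul_sinh {a t : ℝ} (ha : 0 < a) (ha1 : a < 1) (ht : 0 < t) :
    sinh (a * t) < a * sinh t := by
  simpa using strictConvexOn_sinh.2 (mem_Ici.2 ht.le) self_mem_Ici ht.ne' ha (sub_pos.2 ha1)
    (add_sub_cancel a 1)

theorem sq_mul_add_lt_of_sub_inv_lt {a p q : ℝ} (hp : 0 < p) (hq : 0 < q)
    (h : q - q⁻¹ < a * (p - p⁻¹)) : q ^ 2 * (p * q + a) < p * q + a * (p * q) ^ 2 := by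
  have hdiff : p * q + a * (p * q) ^ 2 - q ^ 2 * (p * q + a) =
      p * q ^ 2 * (a * (p - p⁻¹) - (q - q⁻¹)) := by
    field_simp
    ring
  nlinarith [mul_pos (mul_pos hp (pow_pos hq 2)) (sub_pos.2 h)]

theorem M_gt_rpow (a x : ℝ) (ha : 0 < a) (ha1 : a < 1) (hx : 1 < x) :
    Real.sqrt ((x + a * x ^ 2) / (x + a)) > x ^ (a / (1 + a)) := by
  set u := log x / (1 + a)
  have hu : 0 < u := div_pos (log_pos hx) (by linarith)
  have hx_eq : x = exp u * exp (a * u) := by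
    rw [← exp_add, show u + a * u = log x by simp only [u]; field_simp, exp_log (by linarith)]
  have hrpow : x ^ (a / (1 + a)) = exp (a * u) := by
    rw [rpow_def_of_pos (by linarith), mul_div_left_comm]
  have hsinh : exp (a * u) - (exp (a * u))⁻¹ < a * (exp u - (exp u)⁻¹) := by
    have := sinh_mul_lt_mul_sinh ha ha1 hu
    rw [sinh_eq, sinh_eq, exp_neg, exp_neg] at this
    linarith
  rw [hrpow, gt_iff_lt, lt_sqrt (exp_pos _).le, lt_div_iff₀ (by linarith), hx_eq]
  exact sq_mul_add_lt_of_sub_inv_lt (exp_pos u) (exp_pos _) hsinh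
end

section
/- For all real x > 1, and any a ∈ (0,1), the inequality sqrt((x+a)/(1+a)) < (x-1)/(2(1+a)) + 1 < (1 + 2a*x + x^2)/(1 + (1+2a)x) holds; consequently sqrt((x+a)/(1+a)) < (1 + 2a*x + x^2)/(1 + (1+2a)x). -/
/-! Writing `t = x - 1` and `c = 1 + a`, the left side is `√(1 + t / c)`, which lies strictly below
its tangent line `1 + t / (2c)` at `t = 0`. The ratio equals `1 + x t / (1 + (1 + 2a) x)`, and its
denominator is smaller than `2 c x` by exactly `t`, so the ratio lies strictly above that line. -/

theorem Real.sqrt_one_add_lt {x : ℝ} (h : -2 < x) (hx : x ≠ 0) : √(1 + x) < 1 + x / 2 := by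
  rw [Real.sqrt_lt' (by linarith)]
  have : 0 < (x / 2) ^ 2 := by positivity
  linarith [show (1 + x / 2) ^ 2 = 1 + x + (x / 2) ^ 2 by ring]

section Ratio

variable {a x : ℝ}

theorem ratio_eq_one_add (hD : 1 + (1 + 2 * a) * x ≠ 0) :
    (1 + 2 * a * x + x ^ 2) / (1 + (1 + 2 * a) * x) = 1 + x * (x - 1) / (1 + (1 + 2 * a) * x) := by
  rw [one_add_div hD]
  ring

theorem linear_lt_ratio (ha : -1 / 2 ≤ a) (hx : 1 < x) :
    (x - 1) / (2 * (1 + a)) + 1 < (1 + 2 * a * x + x ^ 2) / (1 + (1 + 2 * a) * x) := by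
  have hx0 : 0 < x := by linarith
  have hD : 0 < 1 + (1 + 2 * a) * x := by nlinarith
  have hD_lt : 1 + (1 + 2 * a) * x < 2 * (1 + a) * x := by linarith
  have h_lt : (x - 1) / (2 * (1 + a)) < x * (x - 1) / (1 + (1 + 2 * a) * x) :=
    calc (x - 1) / (2 * (1 + a))
        = x * (x - 1) / (2 * (1 + a) * x) := by field_simp
      _ < x * (x - 1) / (1 + (1 + 2 * a) * x) :=
          div_lt_div_of_pos_left (by nlinarith) hD hD_lt
  rw [ratio_eq_one_add hD.ne']
  linarith

end Ratio

theorem sqrt_lt_linear_lt_ratio_general (a x : ℝ) (ha : 0 < a) (hx : 1 < x) :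
    Real.sqrt ((x + a) / (1 + a)) < (x - 1) / (2 * (1 + a)) + 1 ∧
    (x - 1) / (2 * (1 + a)) + 1 < (1 + 2 * a * x + x ^ 2) / (1 + (1 + 2 * a) * x) ∧
    Real.sqrt ((x + a) / (1 + a)) < (1 + 2 * a * x + x ^ 2) / (1 + (1 + 2 * a) * x) := by
  have hc : 0 < 1 + a := by linarith
  have ht : 0 < (x - 1) / (1 + a) := div_pos (by linarith) hc
  have h_sqrt : Real.sqrt ((x + a) / (1 + a)) < (x - 1) / (2 * (1 + a)) + 1 := by
    have h_arg : (x + a) / (1 + a) = 1 + (x - 1) / (1 + a) := by field_simp; ring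
    have h_lin : (x - 1) / (2 * (1 + a)) + 1 = 1 + (x - 1) / (1 + a) / 2 := by field_simp; ring
    rw [h_arg, h_lin]
    exact Real.sqrt_one_add_lt (by linarith) ht.ne'
  have h_ratio := linear_lt_ratio (by linarith : -1 / 2 ≤ a) hx
  exact ⟨h_sqrt, h_ratio, h_sqrt.trans h_ratio⟩

theorem sqrt_lt_linear_lt_ratio (a x : ℝ) (ha : 0 < a) (ha1 : a < 1) (hx : 1 < x) :
    Real.sqrt ((x + a) / (1 + a)) < (x - 1) / (2 * (1 + a)) + 1 ∧
    (x - 1) / (2 * (1 + a)) + 1 < (1 + 2 * a * x + x ^ 2) / (1 + (1 + 2 * a) * x) ∧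
    Real.sqrt ((x + a) / (1 + a)) < (1 + 2 * a * x + x ^ 2) / (1 + (1 + 2 * a) * x) :=
  sqrt_lt_linear_lt_ratio_general a x ha hx
end

section
/- Let a ∈ (0,1), κ = sqrt(1-a), ν = sqrt(1-a^2)/a, and define v(x) = (ν*sqrt(x+a) + κ*(x-1))/sqrt(x + a*x^2) for x > 1. Then v is strictly decreasing on (1, ∞). -/
/-!
Write `v = (b √(x + a) + k (x - 1)) / √(x + a x²)` with `b = ν`, `k = κ`. Clearing denominators,
`v'(x)` has the sign of `k √(x + a) P - a b Q`, where `P = (1 + 2a) x + 1`, `Q = x² + 2a x + 1`.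
The identity `(1 + a) Q² - (x + a) P² = (x - 1)² ((1 + a) x² + (1 + 2a) x + 1)` gives
`√(x + a) P < √(1 + a) Q` for `x ≠ 1`, so `v' < 0` on `(1, ∞)` whenever `k √(1 + a) ≤ a b`;
for `b = ν`, `k = κ` both sides equal `√(1 - a²)`.
-/

open Real Set

noncomputable def vProfile (a b k x : ℝ) : ℝ :=
  (b * √(x + a) + k * (x - 1)) / √(x + a * x ^ 2)

lemma sqrt_add_mul_lt_sqrt_one_add_mul {a x : ℝ} (ha : 0 ≤ a) (hx : 0 ≤ x) (hx1 : x ≠ 1) :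
    √(x + a) * ((1 + 2 * a) * x + 1) < √(1 + a) * (x ^ 2 + 2 * a * x + 1) := by
  have hdiff : (1 + a) * (x ^ 2 + 2 * a * x + 1) ^ 2 - (x + a) * ((1 + 2 * a) * x + 1) ^ 2 =
      (x - 1) ^ 2 * ((1 + a) * x ^ 2 + (1 + 2 * a) * x + 1) := by ring
  have hpos : 0 < (x - 1) ^ 2 * ((1 + a) * x ^ 2 + (1 + 2 * a) * x + 1) :=
    mul_pos (sq_pos_of_ne_zero (sub_ne_zero.2 hx1)) (by positivity)
  refine lt_of_pow_lt_pow_left₀ 2 (by positivity) ?_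
  rw [mul_pow, mul_pow, sq_sqrt (by positivity), sq_sqrt (by positivity)]
  linarith

lemma hasDerivAt_vProfile (a b k : ℝ) {x : ℝ} (hxa : 0 < x + a) (hx : 0 < x + a * x ^ 2) :
    HasDerivAt (vProfile a b k)
      ((k * √(x + a) * ((1 + 2 * a) * x + 1) - a * b * (x ^ 2 + 2 * a * x + 1)) /
        (2 * √(x + a) * √(x + a * x ^ 2) * (x + a * x ^ 2))) x := by
  have hnum : HasDerivAt (fun y => b * √(y + a) + k * (y - 1))
      (b * (1 / (2 * √(x + a))) + k * 1) x :=
    ((((hasDerivAt_id x).add_const a).sqrt hxa.ne').const_mul b).add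
      (((hasDerivAt_id x).sub_const 1).const_mul k)
  have hden : HasDerivAt (fun y => √(y + a * y ^ 2))
      ((1 + a * (2 * x ^ 1)) / (2 * √(x + a * x ^ 2))) x :=
    (((hasDerivAt_id x).add ((hasDerivAt_pow 2 x).const_mul a)).sqrt hx.ne')
  refine (hnum.div hden (sqrt_pos.2 hx).ne').congr_deriv ?_
  have e1 : √(x + a) ^ 2 = x + a := sq_sqrt hxa.le
  have e2 : √(x + a * x ^ 2) ^ 2 = x + a * x ^ 2 := sq_sqrt hx.le
  have h1 := sqrt_pos.2 hxa
  have h2 := sqrt_pos.2 hx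
  generalize √(x + a) = s1 at *
  generalize √(x + a * x ^ 2) = s2 at *
  -- otherwise `field_simp` factors `x + a * x ^ 2` and the `linear_combination` no longer closes
  rw [← e2]
  field_simp
  linear_combination (b + 2 * k * s1) * e2 - b * (1 + 2 * a * x) * e1

lemma strictAntiOn_vProfile {a b k : ℝ} (ha : 0 ≤ a) (hk : 0 < k) (hb : k * √(1 + a) ≤ a * b) :
    StrictAntiOn (vProfile a b k) (Ioi 1) := by
  have hxa {x : ℝ} (hx : 1 < x) : 0 < x + a := by linarith
  have hxax {x : ℝ} (hx : 1 < x) : 0 < x + a * x ^ 2 := by positivity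
  refine strictAntiOn_of_deriv_neg (convex_Ioi 1)
    (fun x hx => (hasDerivAt_vProfile a b k (hxa hx) (hxax hx)).continuousAt.continuousWithinAt)
    fun x hx => ?_
  rw [interior_Ioi, mem_Ioi] at hx
  rw [(hasDerivAt_vProfile a b k (hxa hx) (hxax hx)).deriv]
  have hxa' := hxa hx
  have hxax' := hxax hx
  refine div_neg_of_neg_of_pos (sub_neg.2 ?_) (by positivity)
  have hQ : 0 ≤ x ^ 2 + 2 * a * x + 1 := by positivity
  calc k * √(x + a) * ((1 + 2 * a) * x + 1)
      < k * (√(1 + a) * (x ^ 2 + 2 * a * x + 1)) := by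
        rw [mul_assoc]
        exact mul_lt_mul_of_pos_left (sqrt_add_mul_lt_sqrt_one_add_mul ha (by linarith) hx.ne') hk
    _ = k * √(1 + a) * (x ^ 2 + 2 * a * x + 1) := by ring
    _ ≤ a * b * (x ^ 2 + 2 * a * x + 1) := mul_le_mul_of_nonneg_right hb hQ

theorem v_strictAnti (a : ℝ) (ha : 0 < a) (ha1 : a < 1) :
    StrictAntiOn
      (fun x : ℝ =>
        (Real.sqrt (1 - a ^ 2) / a * Real.sqrt (x + a) + Real.sqrt (1 - a) * (x - 1)) /
          Real.sqrt (x + a * x ^ 2))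
      (Set.Ioi 1) := by
  refine strictAntiOn_vProfile ha.le (sqrt_pos.2 (by linarith)) (le_of_eq ?_)
  rw [mul_div_cancel₀ _ ha.ne', ← sqrt_mul (by linarith)]
  ring_nf
end

section
/- Let a ∈ (0,1) and E(x) = (1 + a*x)/(x + a) for x > 0. Then for 0 < x, y with x,y > 0, E(x*y) > E(x)*E(y) holds if and only if (1 - x*y)*(1 - x)*(1 - y) < 0. In particular: (a) if 0 < x < 1 < y, then E(xy) > E(x)E(y) if and only if xy < 1; (b) if 0 < x < 1 and 0 < y < 1, then E(xy) < E(x)E(y). -/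
/-!
Clearing the positive denominators, `E x * E y - E (x * y)` is `a (1 - a) (1 - x y) (1 - x) (1 - y)`
divided by `(x + a) (y + a) (x y + a)`, so for `0 < a < 1` its sign is that of
`(1 - x y) (1 - x) (1 - y)`. The two special cases read off this sign.
-/

noncomputable def hugoniotRatio (a x : ℝ) : ℝ := (1 + a * x) / (x + a)

theorem hugoniotRatio_mul_hugoniotRatio_sub {a x y : ℝ} (hx : x + a ≠ 0) (hy : y + a ≠ 0)
    (hxy : x * y + a ≠ 0) :
    hugoniotRatio a x * hugoniotRatio a y - hugoniotRatio a (x * y) =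
      a * (1 - a) * ((1 - x * y) * (1 - x) * (1 - y)) / ((x + a) * (y + a) * (x * y + a)) := by
  unfold hugoniotRatio
  field_simp
  ring

section

variable {a x y : ℝ}

theorem hugoniotRatio_mul_lt_iff (ha : 0 < a) (ha1 : a < 1) (hx : 0 < x) (hy : 0 < y) :
    hugoniotRatio a (x * y) < hugoniotRatio a x * hugoniotRatio a y ↔
      0 < (1 - x * y) * (1 - x) * (1 - y) := by
  have hc : 0 < a * (1 - a) := mul_pos ha (sub_pos.2 ha1)
  rw [← sub_pos, hugoniotRatio_mul_hugoniotRatio_sub (by positivity) (by positivity)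
    (by positivity), div_pos_iff_of_pos_right (by positivity), mul_pos_iff_of_pos_left hc]

theorem lt_hugoniotRatio_mul_iff (ha : 0 < a) (ha1 : a < 1) (hx : 0 < x) (hy : 0 < y) :
    hugoniotRatio a x * hugoniotRatio a y < hugoniotRatio a (x * y) ↔
      (1 - x * y) * (1 - x) * (1 - y) < 0 := by
  have hc : 0 < a * (1 - a) := mul_pos ha (sub_pos.2 ha1)
  rw [← sub_neg, hugoniotRatio_mul_hugoniotRatio_sub (by positivity) (by positivity)
    (by positivity), div_lt_iff₀ (by positivity), zero_mul]
  exact ⟨(neg_of_mul_neg_right · hc.le), mul_neg_of_pos_of_neg hc⟩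

end

theorem E_mul_iff (a : ℝ) (ha : 0 < a) (ha1 : a < 1) :
    (∀ x y : ℝ, 0 < x → 0 < y →
      ((1 + a * (x * y)) / (x * y + a) > (1 + a * x) / (x + a) * ((1 + a * y) / (y + a)) ↔
        (1 - x * y) * (1 - x) * (1 - y) < 0)) ∧
    (∀ x y : ℝ, 0 < x → x < 1 → 1 < y →
      ((1 + a * (x * y)) / (x * y + a) > (1 + a * x) / (x + a) * ((1 + a * y) / (y + a)) ↔
        x * y < 1)) ∧
    (∀ x y : ℝ, 0 < x → x < 1 → 0 < y → y < 1 →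
      (1 + a * (x * y)) / (x * y + a) < (1 + a * x) / (x + a) * ((1 + a * y) / (y + a))) := by
  refine ⟨fun x y hx hy => lt_hugoniotRatio_mul_iff ha ha1 hx hy, ?_, ?_⟩
  · intro x y hx hx1 hy1
    have hsign : (1 - x) * (1 - y) < 0 := mul_neg_of_pos_of_neg (sub_pos.2 hx1) (sub_neg.2 hy1)
    refine (lt_hugoniotRatio_mul_iff ha ha1 hx (hx.trans (hx1.trans hy1))).trans ?_
    rw [mul_assoc]
    exact ⟨fun h => sub_pos.1 (pos_of_mul_neg_left h hsign.le),
      fun h => mul_neg_of_pos_of_neg (sub_pos.2 h) hsign⟩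
  · intro x y hx hx1 hy hy1
    have hxy : x * y < 1 := mul_lt_one_of_nonneg_of_lt_one_left hx.le hx1 hy1.le
    exact (hugoniotRatio_mul_lt_iff ha ha1 hx hy).2
      (mul_pos (mul_pos (sub_pos.2 hxy) (sub_pos.2 hx1)) (sub_pos.2 hy1))
end

section
/- Let a ∈ (0,1), γ = (1+a)/(1-a), and Γ(s) = s^γ * (1 - a*s)/(s - a) for a < s < 1/a. Then Γ'(s) = -a*γ*s^{γ-1}*(s-1)^2/(s-a)^2 for all s ∈ (a, 1/a); in particular Γ is strictly decreasing on (a, 1/a), and Γ(s) > 1 for s < 1 while Γ(s) < 1 for s > 1. -/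
/-!
Writing `γ = (1 + a) / (1 - a)`, the quotient rule gives
`Γ'(s) = s ^ (γ - 1) * (γ (1 - a s) (s - a) - a s (s - a) - s (1 - a s)) / (s - a) ^ 2`,
and the relation `γ (1 - a) = 1 + a` collapses the bracket to `-a γ (s - 1) ^ 2`.
So `Γ' < 0` on `(a, 1/a)` except at `s = 1`, which is enough for strict monotonicity,
and comparing with `Γ(1) = 1` gives the two inequalities.
-/

open Set

theorem strictAntiOn_Ioo_of_hasDerivAt_neg_of_ne {f f' : ℝ → ℝ} {a b c : ℝ} (hc : c ∈ Ioo a b)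
    (hf : ∀ x ∈ Ioo a b, HasDerivAt f (f' x) x) (hf' : ∀ x ∈ Ioo a b, x ≠ c → f' x < 0) :
    StrictAntiOn f (Ioo a b) := by
  have hcont : ContinuousOn f (Ioo a b) := fun x hx => (hf x hx).continuousAt.continuousWithinAt
  have hleft : StrictAntiOn f (Ioc a c) := by
    refine strictAntiOn_of_deriv_neg (convex_Ioc a c)
      (hcont.mono (Ioc_subset_Ioo_right hc.2)) fun x hx => ?_
    rw [interior_Ioc] at hx
    have hx' : x ∈ Ioo a b := ⟨hx.1, hx.2.trans hc.2⟩
    rw [(hf x hx').deriv]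
    exact hf' x hx' hx.2.ne
  have hright : StrictAntiOn f (Ico c b) := by
    refine strictAntiOn_of_deriv_neg (convex_Ico c b)
      (hcont.mono (Ico_subset_Ioo_left hc.1)) fun x hx => ?_
    rw [interior_Ico] at hx
    have hx' : x ∈ Ioo a b := ⟨hc.1.trans hx.1, hx.2⟩
    rw [(hf x hx').deriv]
    exact hf' x hx' hx.1.ne'
  rw [← Ioc_union_Ico_eq_Ioo hc.1 hc.2]
  exact hleft.union hright (isGreatest_Ioc hc.1) ⟨left_mem_Ico.2 hc.2, fun _ => And.left⟩

/-- The paper's `Γ(s)`, with `γ = (1 + a) / (1 - a)`. -/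
noncomputable def entropyJump (a s : ℝ) : ℝ :=
  s ^ ((1 + a) / (1 - a)) * (1 - a * s) / (s - a)

theorem entropyJump_one {a : ℝ} (ha : a ≠ 1) : entropyJump a 1 = 1 := by
  have : 1 - a ≠ 0 := sub_ne_zero.2 ha.symm
  simp [entropyJump, div_self this]

theorem hasDerivAt_entropyJump {a s : ℝ} (ha : a ≠ 1) (hs : s ≠ 0) (hsa : s ≠ a) :
    HasDerivAt (entropyJump a)
      (-a * ((1 + a) / (1 - a)) * s ^ ((1 + a) / (1 - a) - 1) * (s - 1) ^ 2 / (s - a) ^ 2) s := by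
  set γ := (1 + a) / (1 - a) with hγ
  have hpow : HasDerivAt (fun x : ℝ => x ^ γ) (γ * s ^ (γ - 1)) s := by
    simpa using Real.hasDerivAt_rpow_const (p := γ) (Or.inl hs)
  have hlin : HasDerivAt (fun x : ℝ => 1 - a * x) (-a) s := by
    simpa using ((hasDerivAt_id s).const_mul a).const_sub 1
  have hden : HasDerivAt (fun x : ℝ => x - a) 1 s := (hasDerivAt_id s).sub_const a
  refine ((hpow.mul hlin).div hden (sub_ne_zero.2 hsa)).congr_deriv ?_
  have hsγ : s ^ γ = s ^ (γ - 1) * s := by rw [Real.rpow_sub_one hs, div_mul_cancel₀ _ hs]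
  have h1a : 1 - a ≠ 0 := sub_ne_zero.2 ha.symm
  simp only [Pi.mul_apply]
  rw [hsγ]
  generalize s ^ (γ - 1) = t
  rw [hγ]
  field_simp
  ring

theorem Gamma_deriv_and_monotone (a : ℝ) (ha : 0 < a) (ha1 : a < 1) :
    (∀ s ∈ Set.Ioo a (1 / a),
      HasDerivAt (fun s : ℝ => s ^ ((1 + a) / (1 - a)) * (1 - a * s) / (s - a))
        (-a * ((1 + a) / (1 - a)) * s ^ ((1 + a) / (1 - a) - 1) * (s - 1) ^ 2 / (s - a) ^ 2)
        s) ∧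
    StrictAntiOn (fun s : ℝ => s ^ ((1 + a) / (1 - a)) * (1 - a * s) / (s - a))
      (Set.Ioo a (1 / a)) ∧
    (∀ s ∈ Set.Ioo a (1 / a), s < 1 →
      1 < s ^ ((1 + a) / (1 - a)) * (1 - a * s) / (s - a)) ∧
    (∀ s ∈ Set.Ioo a (1 / a), 1 < s →
      s ^ ((1 + a) / (1 - a)) * (1 - a * s) / (s - a) < 1) := by
  have hderiv : ∀ s ∈ Ioo a (1 / a), HasDerivAt (entropyJump a)
      (-a * ((1 + a) / (1 - a)) * s ^ ((1 + a) / (1 - a) - 1) * (s - 1) ^ 2 / (s - a) ^ 2) s :=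
    fun s hs => hasDerivAt_entropyJump ha1.ne (ha.trans hs.1).ne' hs.1.ne'
  have hone : (1 : ℝ) ∈ Ioo a (1 / a) := ⟨ha1, by rw [lt_div_iff₀ ha]; linarith⟩
  have hanti : StrictAntiOn (entropyJump a) (Ioo a (1 / a)) := by
    refine strictAntiOn_Ioo_of_hasDerivAt_neg_of_ne hone hderiv fun s hs hs1 => ?_
    have hγ : 0 < (1 + a) / (1 - a) := div_pos (by linarith) (by linarith)
    have hs0 : 0 < s := ha.trans hs.1
    have hsq : 0 < (s - 1) ^ 2 := sq_pos_of_ne_zero (sub_ne_zero.2 hs1)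
    have hsa : 0 < (s - a) ^ 2 := pow_pos (sub_pos.2 hs.1) 2
    simp only [neg_mul, neg_div, neg_lt_zero]
    positivity
  refine ⟨hderiv, hanti, fun s hs hs1 => ?_, fun s hs hs1 => ?_⟩
  · exact (entropyJump_one ha1.ne).symm.trans_lt (hanti hs hone hs1)
  · exact (hanti hone hs hs1).trans_eq (entropyJump_one ha1.ne)
end

section
/- Let a ∈ (0,1), γ = (1+a)/(1-a), and Γ(s) = s^γ * (1 - a*s)/(s - a). For s, t with s, t, st all in (a, 1/a), one has Γ(s)*Γ(t) < Γ(s*t) if and only if (1 - s*t)*(1 - s)*(1 - t) > 0. -/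
/-!
The power factors cancel, since `(s t)^γ = s^γ t^γ`, so only the rational factor
`(1 - a s) / (s - a)` of `Γ` matters.  Clearing its positive denominators, the defect
`(1 - a s t)(s - a)(t - a) - (1 - a s)(1 - a t)(s t - a)` factors as
`a (1 + a) (1 - s t)(1 - s)(1 - t)`.
-/

noncomputable section

namespace EntropyJump

def ratio (a s : ℝ) : ℝ := (1 - a * s) / (s - a)

def gamma (γ a s : ℝ) : ℝ := s ^ γ * (1 - a * s) / (s - a)

theorem gamma_eq (γ a s : ℝ) : gamma γ a s = s ^ γ * ratio a s :=
  mul_div_assoc _ _ _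

theorem ratio_defect (a s t : ℝ) :
    (1 - a * (s * t)) * ((s - a) * (t - a)) - (1 - a * s) * (1 - a * t) * (s * t - a) =
      a * (1 + a) * ((1 - s * t) * (1 - s) * (1 - t)) := by
  ring

theorem ratio_mul_lt_iff {a s t : ℝ} (ha : 0 < a) (hs : a < s) (ht : a < t)
    (hst : a < s * t) :
    ratio a s * ratio a t < ratio a (s * t) ↔ 0 < (1 - s * t) * (1 - s) * (1 - t) := by
  have hden : 0 < (s - a) * (t - a) := mul_pos (sub_pos.2 hs) (sub_pos.2 ht)
  have hscale : 0 < a * (1 + a) := by positivity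
  rw [ratio, ratio, ratio, div_mul_div_comm, div_lt_div_iff₀ hden (sub_pos.2 hst),
    ← sub_pos, ratio_defect, mul_pos_iff_of_pos_left hscale]

theorem gamma_mul_lt_iff {γ a s t : ℝ} (ha : 0 < a) (hs : a < s) (ht : a < t)
    (hst : a < s * t) :
    gamma γ a s * gamma γ a t < gamma γ a (s * t) ↔
      0 < (1 - s * t) * (1 - s) * (1 - t) := by
  have hs0 : 0 < s := ha.trans hs
  have ht0 : 0 < t := ha.trans ht
  rw [gamma_eq, gamma_eq, gamma_eq, Real.mul_rpow hs0.le ht0.le,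
    mul_mul_mul_comm, mul_lt_mul_iff_right₀ (by positivity)]
  exact ratio_mul_lt_iff ha hs ht hst

end EntropyJump

end

theorem Gamma_superadditive_iff_general (a : ℝ) (ha : 0 < a) (s t : ℝ)
    (hs : s ∈ Set.Ioo a (1 / a)) (ht : t ∈ Set.Ioo a (1 / a))
    (hst : s * t ∈ Set.Ioo a (1 / a)) :
    (s ^ ((1 + a) / (1 - a)) * (1 - a * s) / (s - a)) *
        (t ^ ((1 + a) / (1 - a)) * (1 - a * t) / (t - a)) <
      (s * t) ^ ((1 + a) / (1 - a)) * (1 - a * (s * t)) / (s * t - a) ↔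
    (1 - s * t) * (1 - s) * (1 - t) > 0 :=
  EntropyJump.gamma_mul_lt_iff ha hs.1 ht.1 hst.1

theorem Gamma_superadditive_iff (a : ℝ) (ha : 0 < a) (ha1 : a < 1) (s t : ℝ)
    (hs : s ∈ Set.Ioo a (1 / a)) (ht : t ∈ Set.Ioo a (1 / a))
    (hst : s * t ∈ Set.Ioo a (1 / a)) :
    (s ^ ((1 + a) / (1 - a)) * (1 - a * s) / (s - a)) *
        (t ^ ((1 + a) / (1 - a)) * (1 - a * t) / (t - a)) <
      (s * t) ^ ((1 + a) / (1 - a)) * (1 - a * (s * t)) / (s * t - a) ↔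
    (1 - s * t) * (1 - s) * (1 - t) > 0 :=
  Gamma_superadditive_iff_general a ha s t hs ht hst
end

section
/- For all real a with 0 < a < 1 and all real s with a < s < 1, the polynomial P(a,s) = 2a^2*s^3 − (10a^2 − 5a + 1)*s^2 + (8a^3 − 10a^2 + 14a − 6)*s − (6a^2 − 5a + 1) is strictly negative. -/
/-!
Put `u = 1 - s` and `v = s - a`, both positive, and keep `s` itself, which is positive too.
In these variables `-P` is a polynomial in `u`, `v`, `s` with positive coefficients.
-/

lemma neg_P_expansion_pos {u v s : ℝ} (hu : 0 < u) (hv : 0 < v) (hs : 0 < s) :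
    0 < 8 * s * v ^ 3 + 4 * u * v ^ 2 * (1 + 5 * s) + u ^ 2 * v * (1 + 20 * s) +
      u ^ 3 * (2 * s ^ 2 + 4 * s + 1) + 2 * u ^ 3 * v ^ 2 + 4 * u ^ 4 * v := by
  positivity

theorem P_neg_general (a s : ℝ) (ha : 0 < a) (hs : a < s) (hs1 : s < 1) :
    2 * a ^ 2 * s ^ 3 - (10 * a ^ 2 - 5 * a + 1) * s ^ 2 +
      (8 * a ^ 3 - 10 * a ^ 2 + 14 * a - 6) * s - (6 * a ^ 2 - 5 * a + 1) < 0 := by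
  have hQ := neg_P_expansion_pos (sub_pos.2 hs1) (sub_pos.2 hs) (ha.trans hs)
  have expansion : 2 * a ^ 2 * s ^ 3 - (10 * a ^ 2 - 5 * a + 1) * s ^ 2 +
      (8 * a ^ 3 - 10 * a ^ 2 + 14 * a - 6) * s - (6 * a ^ 2 - 5 * a + 1) =
      -(8 * s * (s - a) ^ 3 + 4 * (1 - s) * (s - a) ^ 2 * (1 + 5 * s) +
        (1 - s) ^ 2 * (s - a) * (1 + 20 * s) + (1 - s) ^ 3 * (2 * s ^ 2 + 4 * s + 1) +
        2 * (1 - s) ^ 3 * (s - a) ^ 2 + 4 * (1 - s) ^ 4 * (s - a)) := by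
    ring
  rw [expansion]
  exact neg_neg_of_pos hQ

theorem P_neg (a s : ℝ) (ha : 0 < a) (ha1 : a < 1) (hs : a < s) (hs1 : s < 1) :
    2 * a ^ 2 * s ^ 3 - (10 * a ^ 2 - 5 * a + 1) * s ^ 2 +
      (8 * a ^ 3 - 10 * a ^ 2 + 14 * a - 6) * s - (6 * a ^ 2 - 5 * a + 1) < 0 :=
  P_neg_general a s ha hs hs1
end

section
/- Let a ∈ (0,1). For x > 1 and y > 1, define H(x,y) = κ[(xy−1)/sqrt(xy+a) − (x−1)/sqrt(x+a) − ((y−1)/sqrt(y+a))·sqrt((x+a*x^2)/(x+a))] where κ = sqrt(1−a). Then H(x,y) > 0 if and only if x*y*((1−a)^2*y − 4a^2) > 4a^2*(y+a), and H(x,y) < 0 if and only if x*y*((1−a)^2*y − 4a^2) < 4a^2*(y+a). -/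
/-!
Write `H = κ (A - B - C)` with `A, B, C > 0` the three square-root terms. Their squares are
rational in `x, y, a`, and the Heron-type factorisation
`(A² + B² - C²)² - 4A²B² = (A - B - C)(A - B + C)(A + B - C)(A + B + C)`
shows that, once `B < A` and `C < A`, the sign of `A - B - C` is that of the left-hand side.
That left-hand side is a rational function of `x, y, a`, and it factors as the
polynomial `x y ((1 - a)² y - 4a²) - 4a² (y + a)` times a positive factor.
-/

theorem sq_add_sq_sub_sq_sq_sub_four_mul_sq_mul_sq {α : Type*} [CommRing α] (A B C : α) :
    (A ^ 2 + B ^ 2 - C ^ 2) ^ 2 - 4 * A ^ 2 * B ^ 2 =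
      (A - B - C) * ((A - B + C) * (A + B - C) * (A + B + C)) := by
  ring

section Sign

variable {α : Type*} [CommRing α] [LinearOrder α] [IsStrictOrderedRing α]

theorem sign_sub_sub_eq_sign {A B C : α} (hB : 0 < B) (hC : 0 < C) (hBA : B < A) (hCA : C < A) :
    SignType.sign (A - B - C) = SignType.sign ((A ^ 2 + B ^ 2 - C ^ 2) ^ 2 - 4 * A ^ 2 * B ^ 2) := by
  have hpos : 0 < (A - B + C) * (A + B - C) * (A + B + C) := by
    apply mul_pos (mul_pos _ _) <;> linarith
  rw [sq_add_sq_sub_sq_sq_sub_four_mul_sq_mul_sq, sign_mul, sign_pos hpos, mul_one]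

theorem sign_mul_of_pos_left {u v : α} (hv : 0 < v) : SignType.sign (v * u) = SignType.sign u := by
  rw [sign_mul, sign_pos hv, one_mul]

end Sign

section Shock

variable {a x y : ℝ}

theorem sq_div_sqrt {u p : ℝ} (hp : 0 ≤ p) : (u / √p) ^ 2 = u ^ 2 / p := by
  rw [div_pow, Real.sq_sqrt hp]

theorem sub_one_sq_div_lt (ha : 0 < a) (hx : 1 < x) (hy : 1 < y) :
    (x - 1) ^ 2 / (x + a) < (x * y - 1) ^ 2 / (x * y + a) := by
  have hxy : 1 < x * y := one_lt_mul hx.le hy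
  rw [div_lt_div_iff₀ (by linarith) (by linarith), ← sub_pos]
  have hx2y : 1 < x ^ 2 * y := one_lt_mul (one_lt_pow₀ hx two_ne_zero).le hy
  have : 0 ≤ a * (x * (y + 1) - 2) := mul_nonneg ha.le (by nlinarith)
  calc 0 < x * (y - 1) * ((x ^ 2 * y - 1) + a * (x * (y + 1) - 2)) := by
        apply mul_pos (mul_pos _ _) <;> linarith
    _ = _ := by ring

theorem sub_one_sq_div_mul_lt (ha : 0 < a) (ha1 : a < 1) (hx : 1 < x) (hy : 1 < y) :
    (y - 1) ^ 2 / (y + a) * ((x + a * x ^ 2) / (x + a)) < (x * y - 1) ^ 2 / (x * y + a) := by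
  have hxy : 1 < x * y := one_lt_mul hx.le hy
  rw [div_mul_div_comm, div_lt_div_iff₀ (by positivity) (by linarith), ← sub_pos]
  have hquad : 0 < x * ((2 + a) * y ^ 2 - y) - (y + a) := by
    have h1 : 0 ≤ (x - 1) * ((2 + a) * y ^ 2 - y) := mul_nonneg (by linarith) (by nlinarith)
    have h2 : 0 < 2 * y * (y - 1) + a * (y ^ 2 - 1) :=
      add_pos (mul_pos (by linarith) (by linarith)) (mul_pos ha (by nlinarith))
    linarith
  have hrest : 0 ≤ (y - 1) ^ 2 * (x * y + a) * (x * ((x - 1) * (1 - a))) := by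
    apply mul_nonneg (mul_nonneg (sq_nonneg _) _) (mul_nonneg _ (mul_nonneg _ _)) <;> linarith
  calc 0 < (x + a) * ((x - 1) * (x * ((2 + a) * y ^ 2 - y) - (y + a))) +
        (y - 1) ^ 2 * (x * y + a) * (x * ((x - 1) * (1 - a))) := by
        refine add_pos_of_pos_of_nonneg (mul_pos ?_ (mul_pos ?_ hquad)) hrest <;> linarith
    _ = _ := by ring

theorem shock_discriminant_eq (hxy : x * y + a ≠ 0) (hx : x + a ≠ 0) (hy : y + a ≠ 0) :
    ((x * y - 1) ^ 2 / (x * y + a) + (x - 1) ^ 2 / (x + a) -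
        (y - 1) ^ 2 / (y + a) * ((x + a * x ^ 2) / (x + a))) ^ 2 -
      4 * ((x * y - 1) ^ 2 / (x * y + a)) * ((x - 1) ^ 2 / (x + a)) =
      (x * y * ((1 - a) ^ 2 * y - 4 * a ^ 2) - 4 * a ^ 2 * (y + a)) *
        (x * (y - 1) ^ 2 * (x - 1) ^ 2 * (x * y - 1) ^ 2 /
          ((x * y + a) * (x + a) * (y + a)) ^ 2) := by
  field_simp
  ring

end Shock

theorem H_sign_iff (a : ℝ) (ha : 0 < a) (ha1 : a < 1) (x y : ℝ) (hx : 1 < x) (hy : 1 < y) :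
    (Real.sqrt (1 - a) *
        ((x * y - 1) / Real.sqrt (x * y + a) - (x - 1) / Real.sqrt (x + a) -
          (y - 1) / Real.sqrt (y + a) * Real.sqrt ((x + a * x ^ 2) / (x + a))) > 0 ↔
      x * y * ((1 - a) ^ 2 * y - 4 * a ^ 2) > 4 * a ^ 2 * (y + a)) ∧
    (Real.sqrt (1 - a) *
        ((x * y - 1) / Real.sqrt (x * y + a) - (x - 1) / Real.sqrt (x + a) -
          (y - 1) / Real.sqrt (y + a) * Real.sqrt ((x + a * x ^ 2) / (x + a))) < 0 ↔
      x * y * ((1 - a) ^ 2 * y - 4 * a ^ 2) < 4 * a ^ 2 * (y + a)) := by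
  have hxy : 1 < x * y := one_lt_mul hx.le hy
  have hw : 0 < (x + a * x ^ 2) / (x + a) := by positivity
  set A := (x * y - 1) / √(x * y + a)
  set B := (x - 1) / √(x + a)
  set C := (y - 1) / √(y + a) * √((x + a * x ^ 2) / (x + a))
  have hA2 : A ^ 2 = (x * y - 1) ^ 2 / (x * y + a) := sq_div_sqrt (by linarith)
  have hB2 : B ^ 2 = (x - 1) ^ 2 / (x + a) := sq_div_sqrt (by linarith)
  have hC2 : C ^ 2 = (y - 1) ^ 2 / (y + a) * ((x + a * x ^ 2) / (x + a)) := by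
    rw [mul_pow, sq_div_sqrt (by linarith), Real.sq_sqrt hw.le]
  have hA : 0 < A := div_pos (by linarith) (Real.sqrt_pos.2 (by linarith))
  have hB : 0 < B := div_pos (by linarith) (Real.sqrt_pos.2 (by linarith))
  have hC : 0 < C := mul_pos (div_pos (by linarith) (Real.sqrt_pos.2 (by linarith)))
    (Real.sqrt_pos.2 hw)
  have hBA : B < A := lt_of_pow_lt_pow_left₀ 2 hA.le <| by
    rw [hA2, hB2]; exact sub_one_sq_div_lt ha hx hy
  have hCA : C < A := lt_of_pow_lt_pow_left₀ 2 hA.le <| by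
    rw [hA2, hC2]; exact sub_one_sq_div_mul_lt ha ha1 hx hy
  have hM : 0 < x * (y - 1) ^ 2 * (x - 1) ^ 2 * (x * y - 1) ^ 2 /
      ((x * y + a) * (x + a) * (y + a)) ^ 2 := by
    have : 0 < x * y + a := by linarith
    apply div_pos (mul_pos (mul_pos (mul_pos _ _) _) _) (by positivity) <;> positivity
  have hsign : SignType.sign (√(1 - a) * (A - B - C)) =
      SignType.sign (x * y * ((1 - a) ^ 2 * y - 4 * a ^ 2) - 4 * a ^ 2 * (y + a)) := by
    rw [sign_mul_of_pos_left (Real.sqrt_pos.2 (by linarith)), sign_sub_sub_eq_sign hB hC hBA hCA,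
      hA2, hB2, hC2, shock_discriminant_eq (by linarith) (by linarith) (by linarith), mul_comm,
      sign_mul_of_pos_left hM]
  simp only [gt_iff_lt]
  rw [← sign_eq_one_iff, hsign, sign_eq_one_iff, sub_pos, ← sign_eq_neg_one_iff, hsign,
    sign_eq_neg_one_iff, sub_neg]
  exact ⟨Iff.rfl, Iff.rfl⟩
end

section
/- Let 0 < a ≤ 1/4 and κ = sqrt(1−a). Then for all x > 1 and y > 1, one has (xy−1)/sqrt(xy+a) > (x−1)/sqrt(x+a) + ((y−1)/sqrt(y+a))·sqrt((x+a*x^2)/(x+a)). -/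
/-!
Write the inequality as `α + β < γ` with `α, β, γ ≥ 0` whose squares are rational functions of
`x, y`, and square twice. After the first squaring the gap `γ² - α² - β²` factors with the
manifestly positive factor `x (x - 1) (y - 1)`; after the second the remaining gap is, up to a
positive factor, the paper's `H(x, y) = x y ((1 - a)² y - 4a²) - 4a² (y + a)`, which is positive
for `x, y > 1` as soon as `a ≤ 1/4`.
-/

lemma add_lt_of_sq_add_sq_lt {α β γ : ℝ} (hγ : 0 ≤ γ)
    (h₁ : α ^ 2 + β ^ 2 < γ ^ 2) (h₂ : 4 * α ^ 2 * β ^ 2 < (γ ^ 2 - α ^ 2 - β ^ 2) ^ 2) :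
    α + β < γ := by
  have hcross : 2 * α * β < γ ^ 2 - α ^ 2 - β ^ 2 :=
    lt_of_pow_lt_pow_left₀ 2 (by linarith) (by linarith)
  exact lt_of_pow_lt_pow_left₀ 2 hγ (by linarith)

namespace ShockOvertaking

variable {a x y : ℝ}

lemma rarefaction_condition_of_le_quarter (ha : 0 ≤ a) (ha14 : a ≤ 1 / 4) (hx : 1 < x)
    (hy : 1 < y) : 4 * a ^ 2 * (y + a) < x * y * ((1 - a) ^ 2 * y - 4 * a ^ 2) := by
  have h1a : 9 / 16 ≤ (1 - a) ^ 2 := by nlinarith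
  have ha2 : a ^ 2 ≤ 1 / 16 := by nlinarith
  have ha3 : a ^ 3 ≤ 1 / 64 := by nlinarith
  have hbracket : 0 < (1 - a) ^ 2 * y - 4 * a ^ 2 := by nlinarith
  -- the difference is `(1 - a)² y² - 8a² y - 4a³ ≥ (y - 1) (9y + 1) / 16`
  calc 4 * a ^ 2 * (y + a) < y * ((1 - a) ^ 2 * y - 4 * a ^ 2) := by
        nlinarith [mul_le_mul_of_nonneg_right h1a (sq_nonneg y)]
    _ < x * y * ((1 - a) ^ 2 * y - 4 * a ^ 2) := by
      rw [mul_assoc]; exact lt_mul_of_one_lt_left (by positivity) hx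

lemma sq_gap_eq (hxa : x + a ≠ 0) (hya : y + a ≠ 0) (hxya : x * y + a ≠ 0) :
    (x * y - 1) ^ 2 / (x * y + a) - (x - 1) ^ 2 / (x + a)
        - (y - 1) ^ 2 / (y + a) * ((x + a * x ^ 2) / (x + a))
      = x * (x - 1) * (y - 1) * (2 * a ^ 2 + y + 3 * a * y + 2 * a * x * y + (1 - a) * x * y ^ 2)
          / ((x + a) * (y + a) * (x * y + a)) := by
  field_simp
  ring

lemma sq_add_sq_lt (ha : 0 ≤ a) (ha1 : a ≤ 1) (hx : 1 < x) (hy : 1 < y) :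
    (x - 1) ^ 2 / (x + a) + (y - 1) ^ 2 / (y + a) * ((x + a * x ^ 2) / (x + a))
      < (x * y - 1) ^ 2 / (x * y + a) := by
  have hxa : 0 < x + a := by linarith
  have hya : 0 < y + a := by linarith
  have hxya : 0 < x * y + a := by nlinarith
  rw [← sub_pos, ← sub_sub, sq_gap_eq hxa.ne' hya.ne' hxya.ne']
  have h1a : 0 ≤ 1 - a := by linarith
  have hx0 : 0 < x - 1 := by linarith
  have hy0 : 0 < y - 1 := by linarith
  have : 0 < 2 * a ^ 2 + y + 3 * a * y + 2 * a * x * y + (1 - a) * x * y ^ 2 := by positivity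
  positivity

lemma four_mul_lt_sq_sub (ha : 0 ≤ a) (ha14 : a ≤ 1 / 4) (hx : 1 < x) (hy : 1 < y) :
    4 * ((x - 1) ^ 2 / (x + a)) * ((y - 1) ^ 2 / (y + a) * ((x + a * x ^ 2) / (x + a)))
      < ((x * y - 1) ^ 2 / (x * y + a) - (x - 1) ^ 2 / (x + a)
          - (y - 1) ^ 2 / (y + a) * ((x + a * x ^ 2) / (x + a))) ^ 2 := by
  have hxa : 0 < x + a := by linarith
  have hya : 0 < y + a := by linarith
  have hxya : 0 < x * y + a := by nlinarith
  rw [← sub_pos, sq_gap_eq hxa.ne' hya.ne' hxya.ne']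
  have hH := sub_pos.2 (rarefaction_condition_of_le_quarter ha ha14 hx hy)
  have key : (x * (x - 1) * (y - 1) * (2 * a ^ 2 + y + 3 * a * y + 2 * a * x * y + (1 - a) * x * y ^ 2)
          / ((x + a) * (y + a) * (x * y + a))) ^ 2
        - 4 * ((x - 1) ^ 2 / (x + a)) * ((y - 1) ^ 2 / (y + a) * ((x + a * x ^ 2) / (x + a)))
      = x * (x - 1) ^ 2 * (y - 1) ^ 2 * (x * y - 1) ^ 2
          * (x * y * ((1 - a) ^ 2 * y - 4 * a ^ 2) - 4 * a ^ 2 * (y + a))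
          / ((x + a) * (y + a) * (x * y + a)) ^ 2 := by
    field_simp
    ring
  rw [key]
  have hx0 : 0 < x - 1 := by linarith
  have hy0 : 0 < y - 1 := by linarith
  have hxy0 : 0 < x * y - 1 := by nlinarith
  positivity

end ShockOvertaking

theorem reflected_rarefaction (a : ℝ) (ha : 0 < a) (ha14 : a ≤ 1 / 4)
    (x y : ℝ) (hx : 1 < x) (hy : 1 < y) :
    (x * y - 1) / Real.sqrt (x * y + a) >
      (x - 1) / Real.sqrt (x + a) +
        (y - 1) / Real.sqrt (y + a) * Real.sqrt ((x + a * x ^ 2) / (x + a)) := by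
  have sq_div_sqrt : ∀ u {v : ℝ}, 0 ≤ v → (u / √v) ^ 2 = u ^ 2 / v := fun u v hv => by
    rw [div_pow, Real.sq_sqrt hv]
  have hxa : 0 ≤ x + a := by linarith
  have hya : 0 ≤ y + a := by linarith
  have hxya : 0 ≤ x * y + a := by nlinarith
  have hS : 0 ≤ (x + a * x ^ 2) / (x + a) := by positivity
  apply add_lt_of_sq_add_sq_lt (div_nonneg (by nlinarith) (Real.sqrt_nonneg _)) <;>
  rw [mul_pow, sq_div_sqrt _ hxa, sq_div_sqrt _ hya, sq_div_sqrt _ hxya, Real.sq_sqrt hS]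
  · exact ShockOvertaking.sq_add_sq_lt ha.le (by linarith) hx hy
  · exact ShockOvertaking.four_mul_lt_sq_sub ha.le ha14 hx hy
end

section
/- Let a ∈ (0,1), ζ = a/(1+a). Define M(q) = q^ζ for 0 < q ≤ 1 and M(q) = sqrt((q + a*q^2)/(q + a)) for q ≥ 1, and define m(q) = q*M'(q)/M(q) (so m(q) = ζ for 0 < q < 1 and m(q) = a(1 + 2a*q + q^2)/(2(q+a)(1+aq)) for q > 1). Then m(q) < 1/2 for all q > 0, and m(q) ≥ ζ for all q > 0. -/
/-!
For `q ≤ 1` both bounds concern the constant `ζ = a/(1+a)`, and `ζ < 1/2` is `a < 1`.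
For `q > 1`, clearing denominators reduces them to the identities
`(q+a)(1+aq) - a(1+2aq+q²) = q(1-a²)` and `(1+a)(1+2aq+q²) - 2(q+a)(1+aq) = (1-a)(q-1)²`.
-/

namespace BackwardWave

/-- The logarithmic derivative `m(q)` on the branch `q > 1`. -/
noncomputable def logDerivAbove (a q : ℝ) : ℝ :=
  a * (1 + 2 * a * q + q ^ 2) / (2 * (q + a) * (1 + a * q))

theorem div_one_add_lt_half {a : ℝ} (ha : -1 < a) (ha1 : a < 1) : a / (1 + a) < 1 / 2 := by
  rw [div_lt_div_iff₀ (by linarith) two_pos]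
  linarith

section

variable {a q : ℝ}

theorem logDerivAbove_denom_pos (ha : 0 ≤ a) (hq : 0 < q) : 0 < 2 * (q + a) * (1 + a * q) := by
  positivity

theorem logDerivAbove_lt_half (ha : 0 ≤ a) (ha1 : a < 1) (hq : 0 < q) :
    logDerivAbove a q < 1 / 2 := by
  have gap : (q + a) * (1 + a * q) - a * (1 + 2 * a * q + q ^ 2) = q * (1 - a) * (1 + a) := by
    ring
  have gap_pos : 0 < q * (1 - a) * (1 + a) := by
    have : 0 < 1 - a := by linarith
    positivity
  rw [logDerivAbove, div_lt_div_iff₀ (logDerivAbove_denom_pos ha hq) two_pos]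
  linarith

theorem div_one_add_le_logDerivAbove (ha : 0 ≤ a) (ha1 : a ≤ 1) (hq : 0 < q) :
    a / (1 + a) ≤ logDerivAbove a q := by
  have gap : a * (1 + 2 * a * q + q ^ 2) * (1 + a) - a * (2 * (q + a) * (1 + a * q))
      = a * (1 - a) * (q - 1) ^ 2 := by
    ring
  have gap_nonneg : 0 ≤ a * (1 - a) * (q - 1) ^ 2 := by
    have : 0 ≤ 1 - a := by linarith
    positivity
  rw [logDerivAbove, div_le_div_iff₀ (by linarith) (logDerivAbove_denom_pos ha hq)]
  linarith

end

end BackwardWave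

theorem m_bounds (a : ℝ) (ha : 0 < a) (ha1 : a < 1) (q : ℝ) (hq : 0 < q) :
    (if q ≤ 1 then a / (1 + a)
      else a * (1 + 2 * a * q + q ^ 2) / (2 * (q + a) * (1 + a * q))) < 1 / 2 ∧
    (if q ≤ 1 then a / (1 + a)
      else a * (1 + 2 * a * q + q ^ 2) / (2 * (q + a) * (1 + a * q))) ≥ a / (1 + a) := by
  split_ifs
  · exact ⟨BackwardWave.div_one_add_lt_half (by linarith) ha1, le_rfl⟩
  · exact ⟨BackwardWave.logDerivAbove_lt_half ha.le ha1 hq,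
      BackwardWave.div_one_add_le_logDerivAbove ha.le ha1.le hq⟩
end

section
/- Let a ∈ (0,1), γ = (1+a)/(1-a), and define D(q) = q^{1/γ} * (1 + a*q)/(q + a) for q > 0. Then D is strictly increasing on (0,∞), D(1) = 1, and D(q) → ∞ as q → ∞. -/
open Filter Set

theorem strictMonoOn_of_deriv_pos_of_ne {D : Set ℝ} (hD : Convex ℝ D) {f : ℝ → ℝ}
    (hf : ContinuousOn f D) (c : ℝ) (hf' : ∀ x ∈ interior D, x ≠ c → 0 < deriv f x) :
    StrictMonoOn f D := by
  by_cases hc : c ∈ D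
  · have left : StrictMonoOn f (D ∩ Iic c) :=
      strictMonoOn_of_deriv_pos (hD.inter (convex_Iic c)) (hf.mono inter_subset_left)
        fun x hx => by
          rw [interior_inter, interior_Iic] at hx
          exact hf' x hx.1 hx.2.ne
    have right : StrictMonoOn f (D ∩ Ici c) :=
      strictMonoOn_of_deriv_pos (hD.inter (convex_Ici c)) (hf.mono inter_subset_left)
        fun x hx => by
          rw [interior_inter, interior_Ici] at hx
          exact hf' x hx.1 hx.2.ne'
    have glued := left.union right ⟨⟨hc, self_mem_Iic⟩, fun _ hx => hx.2⟩
      ⟨⟨hc, self_mem_Ici⟩, fun _ hx => hx.2⟩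
    rwa [← inter_union_distrib_left, Iic_union_Ici, inter_univ] at glued
  · exact strictMonoOn_of_deriv_pos hD hf fun x hx =>
      hf' x hx (ne_of_mem_of_not_mem (interior_subset hx) hc)

/-- `D(q)` with the exponent `1/γ` written as `(1 - a) / (1 + a)`. -/
noncomputable def contactRatio (a q : ℝ) : ℝ :=
  q ^ ((1 - a) / (1 + a)) * ((1 + a * q) / (q + a))

section contactRatio

variable {a : ℝ}

theorem contactRatio_one (ha : 1 + a ≠ 0) : contactRatio a 1 = 1 := by
  simp [contactRatio, ha]

/-- Multiplied by `q (1 + a q) (q + a) (1 + a) / (1 - a)`, the logarithmic derivative of `D`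
becomes `(1 + a q) (q + a) - (1 + a)² q = a (q - 1)²`, so it vanishes only at `q = 1`. -/
theorem hasDerivAt_contactRatio (ha : 0 ≤ a) {x : ℝ} (hx : 0 < x) :
    HasDerivAt (contactRatio a)
      (a * ((1 - a) / (1 + a)) * x ^ ((1 - a) / (1 + a) - 1) * (x - 1) ^ 2 / (x + a) ^ 2) x := by
  have hxa : x + a ≠ 0 := by positivity
  have hpow := Real.hasDerivAt_rpow_const (p := (1 - a) / (1 + a)) (Or.inl hx.ne')
  have hfrac : HasDerivAt (fun q : ℝ => (1 + a * q) / (q + a))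
      ((a * (x + a) - (1 + a * x) * 1) / (x + a) ^ 2) x := by
    refine HasDerivAt.div ?_ ((hasDerivAt_id x).add_const a) hxa
    simpa using ((hasDerivAt_id x).const_mul a).const_add 1
  refine (hpow.mul hfrac).congr_deriv ?_
  have hsplit : x ^ ((1 - a) / (1 + a)) = x ^ ((1 - a) / (1 + a) - 1) * x := by
    rw [← Real.rpow_add_one hx.ne', sub_add_cancel]
  rw [hsplit]
  have : 1 + a ≠ 0 := by positivity
  field_simp
  ring

theorem strictMonoOn_contactRatio (ha : 0 < a) (ha1 : a < 1) :
    StrictMonoOn (contactRatio a) (Ioi 0) := by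
  have hderiv : ∀ x ∈ Ioi (0 : ℝ), HasDerivAt (contactRatio a) _ x :=
    fun x hx => hasDerivAt_contactRatio ha.le hx
  refine strictMonoOn_of_deriv_pos_of_ne (convex_Ioi 0)
    (fun x hx => (hderiv x hx).continuousAt.continuousWithinAt) 1 fun x hx hx1 => ?_
  rw [interior_Ioi] at hx
  have hx0 : (0 : ℝ) < x := hx
  have hexp : 0 < (1 - a) / (1 + a) := div_pos (by linarith) (by linarith)
  have hsq : 0 < (x - 1) ^ 2 := by
    have := sub_ne_zero.mpr hx1
    positivity
  rw [(hderiv x hx).deriv]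
  positivity

theorem tendsto_contactRatio_atTop (ha : 0 < a) (ha1 : a < 1) :
    Tendsto (contactRatio a) atTop atTop := by
  have hexp : 0 < (1 - a) / (1 + a) := div_pos (by linarith) (by linarith)
  refine tendsto_atTop_mono' atTop ?_ ((tendsto_rpow_atTop hexp).const_mul_atTop ha)
  filter_upwards [eventually_gt_atTop 0] with q hq
  -- `1 + a q - a (q + a) = 1 - a² > 0`
  have hfrac : a ≤ (1 + a * q) / (q + a) := by
    rw [le_div_iff₀ (by positivity)]
    nlinarith
  rw [contactRatio, mul_comm a]
  exact mul_le_mul_of_nonneg_left hfrac (by positivity)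

end contactRatio

theorem D_properties (a : ℝ) (ha : 0 < a) (ha1 : a < 1) :
    StrictMonoOn
        (fun q : ℝ => q ^ (1 / ((1 + a) / (1 - a))) * ((1 + a * q) / (q + a)))
        (Set.Ioi 0) ∧
    (1 : ℝ) ^ (1 / ((1 + a) / (1 - a))) * ((1 + a * 1) / (1 + a)) = 1 ∧
    Filter.Tendsto
      (fun q : ℝ => q ^ (1 / ((1 + a) / (1 - a))) * ((1 + a * q) / (q + a)))
      Filter.atTop Filter.atTop := by
  simp only [one_div_div]
  exact ⟨strictMonoOn_contactRatio ha ha1, contactRatio_one (by positivity),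
    tendsto_contactRatio_atTop ha ha1⟩
end

section
/- Let a ∈ (0,1), ζ = a/(1+a), κ = sqrt(1−a), ν = sqrt(1−a^2)/a, and define α(q) = ψ→(q) − ψ←(q) where ψ→(q) = ν(q^ζ − 1) for q ≥ 1, ψ→(q) = κ(q−1)/sqrt(q+a) for 0 < q ≤ 1, ψ←(q) = ν(q^ζ − 1) for 0 < q ≤ 1, and ψ←(q) = κ(q−1)/sqrt(q+a) for q ≥ 1. If a = 1/4 (i.e. γ = 5/3), then α(q) = 0 if and only if q = 1. -/
/-!
On either side of `q = 1` the equation `α(q) = 0` is the same equation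
`κ (q - 1) / √(q + a) = ν (q ^ ζ - 1)`. For `a = 1/4` we have `ζ = 1/5`, so substituting
`q = t ^ 5` and squaring gives `(t ^ 5 - 1) ^ 2 = 20 (t - 1) ^ 2 (t ^ 5 + 1/4)`, which factors as
`(t - 1) ^ 5 * P t = 0` with `P` a polynomial with positive coefficients; hence `t = 1`.
-/

open Real

lemma sq_eq_sq_mul_of_div_sqrt_eq {x y z : ℝ} (hy : 0 < y) (h : x / √y = z) :
    x ^ 2 = z ^ 2 * y := by
  rw [div_eq_iff (sqrt_pos.2 hy).ne'] at h
  rw [h, mul_pow, sq_sqrt hy.le]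

lemma eq_one_of_sq_pow_five_sub_one_eq {t : ℝ} (ht : 0 ≤ t)
    (h : (t ^ 5 - 1) ^ 2 = 20 * (t - 1) ^ 2 * (t ^ 5 + 1 / 4)) : t = 1 := by
  have hfactor : (t - 1) ^ 5 * (t ^ 5 + 5 * t ^ 4 + 15 * t ^ 3 + 15 * t ^ 2 + 10 * t + 4) = 0 := by
    linear_combination h
  have hpos : 0 < t ^ 5 + 5 * t ^ 4 + 15 * t ^ 3 + 15 * t ^ 2 + 10 * t + 4 := by positivity
  have := pow_eq_zero_iff (n := 5) (by norm_num) |>.1 ((mul_eq_zero.1 hfactor).resolve_right hpos.ne')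
  linarith

lemma eq_one_of_monatomic_wave_curves_eq {q : ℝ} (hq : 0 < q)
    (h : √(1 - 1 / 4) * (q - 1) / √(q + 1 / 4)
      = √(1 - (1 / 4) ^ 2) / (1 / 4) * (q ^ ((1 / 4 : ℝ) / (1 + 1 / 4)) - 1)) : q = 1 := by
  obtain ⟨t, ht, rfl⟩ : ∃ t : ℝ, 0 ≤ t ∧ q = t ^ 5 :=
    ⟨q ^ ((5 : ℕ)⁻¹ : ℝ), by positivity, (rpow_inv_natCast_pow hq.le (by norm_num)).symm⟩
  have hζ : (t ^ 5) ^ ((1 / 4 : ℝ) / (1 + 1 / 4)) = t := by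
    rw [show (1 / 4 : ℝ) / (1 + 1 / 4) = ((5 : ℕ) : ℝ)⁻¹ by norm_num]
    exact pow_rpow_inv_natCast ht (by norm_num)
  have hsq := sq_eq_sq_mul_of_div_sqrt_eq (by positivity) h
  rw [hζ, mul_pow, mul_pow, div_pow, sq_sqrt (by norm_num), sq_sqrt (by norm_num)] at hsq
  rw [eq_one_of_sq_pow_five_sub_one_eq ht (by linarith), one_pow]

theorem alpha_root_monatomic (q : ℝ) (hq : 0 < q) :
    (let a : ℝ := 1 / 4
     let ζ : ℝ := a / (1 + a)
     let κ : ℝ := Real.sqrt (1 - a)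
     let ν : ℝ := Real.sqrt (1 - a ^ 2) / a
     let ψfwd : ℝ → ℝ := fun q =>
       if q ≤ 1 then κ * (q - 1) / Real.sqrt (q + a) else ν * (q ^ ζ - 1)
     let ψbwd : ℝ → ℝ := fun q =>
       if q ≤ 1 then ν * (q ^ ζ - 1) else κ * (q - 1) / Real.sqrt (q + a)
     ψfwd q - ψbwd q = 0) ↔ q = 1 := by
  dsimp only
  constructor
  · intro h
    apply eq_one_of_monatomic_wave_curves_eq hq
    split_ifs at h <;> linarith
  · rintro rfl
    norm_num
end

section
/- Let 0 < a < 1/4, ζ = a/(1+a), κ = sqrt(1−a), ν = sqrt(1−a^2)/a, and α(q) = ψ→(q) − ψ←(q) as defined from the wave-curve velocity functions (ψ→(q) = ν(q^ζ−1) for q ≥ 1 and κ(q−1)/sqrt(q+a) for q ≤ 1; ψ← with the two branches interchanged). Then α has exactly two zeros in (0,∞): one at q = 1 and one at some y₀ ∈ (0,1). -/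
/-! For `q > 0`, `α q = 0` iff `κ (q - 1) / √(q + a) = ν (q ^ ζ - 1)`. Both sides have the sign of
`q - 1`, so squaring loses nothing and the zeros of `α` are those of
`H q = a² (q - 1)² - (1 + a) (q + a) (q ^ ζ - 1)²`.
Differentiating `H` and dividing each time by a positive power of `q` gives `H₁, …, H₄`; all of
`H, H₁, H₂, H₃` vanish at `1`, while `H₄ 1 = 2 a² (1 - 4 a) / (1 + a)² > 0` and `H₄` is strictly
increasing, its derivative `H₅` being positive because `ζ < 1 / 2`. Monotonicity carried back down
the chain makes `H` positive on `(1, ∞)` and just to the left of `1`; since `H 0 = -a`, there is a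
zero `y₀ ∈ (0, 1)`. Rolle's theorem carries "at most one zero in `(0, 1)`" from `H₄` back to `H`. -/

open Real Set Filter Topology

section RpowMulDeriv

variable {f g : ℝ → ℝ} {d : ℝ}

lemma exists_mem_Ioo_eq_zero_of_rpow_mul_deriv
    (hf : ∀ q, 0 < q → HasDerivAt f (q ^ d * g q) q) {p r : ℝ} (hp : 0 < p) (hpr : p < r)
    (hfpr : f p = f r) : ∃ c ∈ Ioo p r, g c = 0 := by
  obtain ⟨c, hc, hc0⟩ := exists_hasDerivAt_eq_zero hpr
    (fun x hx => (hf x (hp.trans_le hx.1)).continuousAt.continuousWithinAt) hfpr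
    (fun x hx => hf x (hp.trans hx.1))
  exact ⟨c, hc, (mul_eq_zero.1 hc0).resolve_left (rpow_pos_of_pos (hp.trans hc.1) d).ne'⟩

lemma strictMonoOn_of_rpow_mul_deriv (hf : ∀ q, 0 < q → HasDerivAt f (q ^ d * g q) q)
    {s : Set ℝ} (hs : Convex ℝ s) (hs0 : s ⊆ Ioi 0) (hg : ∀ x ∈ interior s, 0 < g x) :
    StrictMonoOn f s :=
  strictMonoOn_of_deriv_pos hs (fun x hx => (hf x (hs0 hx)).continuousAt.continuousWithinAt)
    fun x hx => by
      have hx0 : 0 < x := hs0 (interior_subset hx)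
      rw [(hf x hx0).deriv]
      exact mul_pos (rpow_pos_of_pos hx0 d) (hg x hx)

lemma pos_of_one_lt_of_rpow_mul_deriv (hf : ∀ q, 0 < q → HasDerivAt f (q ^ d * g q) q)
    (hf1 : f 1 = 0) (hg : ∀ x, 1 < x → 0 < g x) : ∀ x, 1 < x → 0 < f x := by
  have hmono := strictMonoOn_of_rpow_mul_deriv hf (convex_Ici 1)
    (fun y hy => mem_Ioi.2 (one_pos.trans_le hy)) (by rw [interior_Ici]; exact hg)
  intro x hx
  simpa [hf1] using hmono self_mem_Ici (mem_Ici.2 hx.le) hx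

lemma neg_of_mem_Ioo_of_rpow_mul_deriv (hf : ∀ q, 0 < q → HasDerivAt f (q ^ d * g q) q)
    {c : ℝ} (hc : 0 < c) (hf1 : f 1 = 0) (hg : ∀ x ∈ Ioo c 1, 0 < g x) :
    ∀ x ∈ Ioo c 1, f x < 0 := by
  have hmono := strictMonoOn_of_rpow_mul_deriv hf (convex_Icc c 1)
    (fun y hy => hc.trans_le hy.1) (by rwa [interior_Icc])
  intro x hx
  simpa [hf1] using hmono (Ioo_subset_Icc_self hx) (right_mem_Icc.2 (hx.1.trans hx.2).le) hx.2

lemma pos_of_mem_Ioo_of_rpow_mul_deriv (hf : ∀ q, 0 < q → HasDerivAt f (q ^ d * g q) q)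
    {c : ℝ} (hc : 0 < c) (hf1 : f 1 = 0) (hg : ∀ x ∈ Ioo c 1, g x < 0) :
    ∀ x ∈ Ioo c 1, 0 < f x := by
  have hneg := neg_of_mem_Ioo_of_rpow_mul_deriv (f := -f) (g := -g)
    (fun q hq => by simpa using (hf q hq).neg) hc (by simp [hf1])
    (fun x hx => neg_pos.2 (hg x hx))
  intro x hx
  simpa using hneg x hx

lemma subsingleton_zeros_of_rpow_mul_deriv (hf : ∀ q, 0 < q → HasDerivAt f (q ^ d * g q) q)
    (hf1 : f 1 = 0) (hg : {x ∈ Ioo (0 : ℝ) 1 | g x = 0}.Subsingleton) :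
    {x ∈ Ioo (0 : ℝ) 1 | f x = 0}.Subsingleton := by
  intro x hx y hy
  by_contra hne
  wlog hxy : x < y generalizing x y
  · exact this hy hx (Ne.symm hne) (lt_of_le_of_ne (not_lt.1 hxy) (Ne.symm hne))
  obtain ⟨⟨hx0, -⟩, hfx⟩ := hx
  obtain ⟨⟨hy0, hy1⟩, hfy⟩ := hy
  obtain ⟨c₁, hc₁, hgc₁⟩ := exists_mem_Ioo_eq_zero_of_rpow_mul_deriv hf hx0 hxy (hfx.trans hfy.symm)
  obtain ⟨c₂, hc₂, hgc₂⟩ := exists_mem_Ioo_eq_zero_of_rpow_mul_deriv hf hy0 hy1 (hfy.trans hf1.symm)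
  exact (hc₁.2.trans hc₂.1).ne <| hg ⟨⟨hx0.trans hc₁.1, hc₁.2.trans hy1⟩, hgc₁⟩
    ⟨⟨hy0.trans hc₂.1, hc₂.2⟩, hgc₂⟩

end RpowMulDeriv

namespace TransitionCurves

variable {a t q : ℝ}

noncomputable def H (a t q : ℝ) : ℝ := a ^ 2 * (q - 1) ^ 2 - (1 + a) * (q + a) * (q ^ t - 1) ^ 2

noncomputable def H₁ (a t q : ℝ) : ℝ :=
  2*a*(1+a)*t - 2*a*(1+a)*t * q ^ t - (1+a+2*a^2) * q ^ (1-t) + 2*(1+a)*(t+1) * q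
    - (1+a)*(2*t+1) * q ^ (t+1) + 2*a^2 * q ^ (2-t)

noncomputable def H₂ (a t q : ℝ) : ℝ :=
  -(2*a*(1+a)*t^2) * q ^ (2*t-1) - (1+a+2*a^2)*(1-t) + 2*(1+a)*(t+1) * q ^ t
    - (1+a)*(2*t+1)*(t+1) * q ^ (2*t) + 2*a^2*(2-t) * q

noncomputable def H₃ (a t q : ℝ) : ℝ :=
  -(2*a*(1+a)*t^2*(2*t-1)) * q ^ (t-1) + 2*(1+a)*(t+1)*t
    - 2*(1+a)*(2*t+1)*(t+1)*t * q ^ t + 2*a^2*(2-t) * q ^ (1-t)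

noncomputable def H₄ (a t q : ℝ) : ℝ :=
  -(2*a*(1+a)*t^2*(2*t-1)*(t-1)) * q ^ (-1:ℝ) - 2*(1+a)*(2*t+1)*(t+1)*t^2
    + 2*a^2*(2-t)*(1-t) * q ^ (1-2*t)

noncomputable def H₅ (a t q : ℝ) : ℝ :=
  2*a*(1+a)*t^2*(2*t-1)*(t-1) * q ^ (-2:ℝ) + 2*a^2*(2-t)*(1-t)*(1-2*t) * q ^ (-(2*t))

lemma hasDerivAt_H (hq : 0 < q) : HasDerivAt (H a t) (q ^ (t-1) * H₁ a t q) q := by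
  have h := ((((hasDerivAt_id q).sub_const 1).pow 2).const_mul (a ^ 2)).sub
    ((((hasDerivAt_id q).add_const a).const_mul (1 + a)).mul
      (((hasDerivAt_rpow_const (p := t) (Or.inl hq.ne')).sub_const 1).pow 2))
  refine h.congr_deriv ?_
  simp only [H₁, id, Pi.pow_apply, show (2:ℝ) = 1 + 1 by norm_num, rpow_add hq, rpow_sub hq,
    rpow_one]
  field_simp
  ring

lemma hasDerivAt_H₁ (hq : 0 < q) : HasDerivAt (H₁ a t) (q ^ (-t) * H₂ a t q) q := by
  have h := (((((hasDerivAt_const q (2*a*(1+a)*t)).sub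
      ((hasDerivAt_rpow_const (p := t) (Or.inl hq.ne')).const_mul (2*a*(1+a)*t))).sub
      ((hasDerivAt_rpow_const (p := 1-t) (Or.inl hq.ne')).const_mul (1+a+2*a^2))).add
      ((hasDerivAt_id q).const_mul (2*(1+a)*(t+1)))).sub
      ((hasDerivAt_rpow_const (p := t+1) (Or.inl hq.ne')).const_mul ((1+a)*(2*t+1)))).add
      ((hasDerivAt_rpow_const (p := 2-t) (Or.inl hq.ne')).const_mul (2*a^2))
  refine h.congr_deriv ?_
  simp only [H₂, show (2:ℝ) * t = t + t by ring]
  simp only [show (2:ℝ) = 1 + 1 by norm_num]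
  simp only [rpow_add hq, rpow_sub hq, rpow_neg hq.le, rpow_one]
  field_simp
  ring

lemma hasDerivAt_H₂ (hq : 0 < q) : HasDerivAt (H₂ a t) (q ^ (t-1) * H₃ a t q) q := by
  have h := (((((hasDerivAt_rpow_const (p := 2*t-1) (Or.inl hq.ne')).const_mul
      (-(2*a*(1+a)*t^2))).sub
      (hasDerivAt_const q ((1+a+2*a^2)*(1-t)))).add
      ((hasDerivAt_rpow_const (p := t) (Or.inl hq.ne')).const_mul (2*(1+a)*(t+1)))).sub
      ((hasDerivAt_rpow_const (p := 2*t) (Or.inl hq.ne')).const_mul ((1+a)*(2*t+1)*(t+1)))).add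
      ((hasDerivAt_id q).const_mul (2*a^2*(2-t)))
  refine h.congr_deriv ?_
  simp only [H₃, show (2:ℝ) * t = t + t by ring]
  simp only [show (2:ℝ) = 1 + 1 by norm_num]
  simp only [rpow_add hq, rpow_sub hq, rpow_one]
  field_simp
  ring

lemma hasDerivAt_H₃ (hq : 0 < q) : HasDerivAt (H₃ a t) (q ^ (t-1) * H₄ a t q) q := by
  have h := ((((hasDerivAt_rpow_const (p := t-1) (Or.inl hq.ne')).const_mul
      (-(2*a*(1+a)*t^2*(2*t-1)))).add
      (hasDerivAt_const q (2*(1+a)*(t+1)*t))).sub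
      ((hasDerivAt_rpow_const (p := t) (Or.inl hq.ne')).const_mul
        (2*(1+a)*(2*t+1)*(t+1)*t))).add
      ((hasDerivAt_rpow_const (p := 1-t) (Or.inl hq.ne')).const_mul (2*a^2*(2-t)))
  refine h.congr_deriv ?_
  simp only [H₄, show (2:ℝ) * t = t + t by ring, show (-1:ℝ) = 0 - 1 by norm_num,
    rpow_add hq, rpow_sub hq, rpow_one, rpow_zero]
  field_simp
  ring

lemma hasDerivAt_H₄ (hq : 0 < q) : HasDerivAt (H₄ a t) (q ^ (0:ℝ) * H₅ a t q) q := by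
  have h := (((hasDerivAt_rpow_const (p := (-1:ℝ)) (Or.inl hq.ne')).const_mul
      (-(2*a*(1+a)*t^2*(2*t-1)*(t-1)))).sub
      (hasDerivAt_const q (2*(1+a)*(2*t+1)*(t+1)*t^2))).add
      ((hasDerivAt_rpow_const (p := 1-2*t) (Or.inl hq.ne')).const_mul (2*a^2*(2-t)*(1-t)))
  refine h.congr_deriv ?_
  simp only [H₅, show (2:ℝ) * t = t + t by ring, show (-1:ℝ) = 0 - 1 by norm_num,
    show (-2:ℝ) = 0 - 1 - 1 by norm_num, rpow_add hq, rpow_sub hq, rpow_neg hq.le, rpow_one,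
    rpow_zero]
  field_simp
  ring

lemma H_one : H a t 1 = 0 := by simp [H]

lemma H₁_one : H₁ a t 1 = 0 := by simp only [H₁, one_rpow]; ring

lemma H₂_one (ha : 0 < a) : H₂ a (a / (1 + a)) 1 = 0 := by
  have : 1 + a ≠ 0 := by positivity
  simp only [H₂, one_rpow]; field_simp; ring

lemma H₃_one (ha : 0 < a) : H₃ a (a / (1 + a)) 1 = 0 := by
  have : 1 + a ≠ 0 := by positivity
  simp only [H₃, one_rpow]; field_simp; ring

lemma H₄_one_pos (ha : 0 < a) (ha14 : a < 1 / 4) : 0 < H₄ a (a / (1 + a)) 1 := by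
  have h1a : 1 + a ≠ 0 := by positivity
  have h14 : 0 < 1 - 4 * a := by linarith
  rw [show H₄ a (a / (1 + a)) 1 = 2 * a ^ 2 * (1 - 4 * a) / (1 + a) ^ 2 by
    simp only [H₄, one_rpow]; field_simp; ring]
  positivity

lemma H₅_pos (ha : 0 < a) (ht0 : 0 < t) (ht : t < 1 / 2) (hq : 0 < q) : 0 < H₅ a t q := by
  have hA : 0 < 2*a*(1+a)*t^2*((2*t-1)*(t-1)) :=
    mul_pos (by positivity) (mul_pos_of_neg_of_neg (by linarith) (by linarith))
  have hB : 0 < 2*a^2*((2-t)*(1-t)*(1-2*t)) :=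
    mul_pos (by positivity) (mul_pos (mul_pos (by linarith) (by linarith)) (by linarith))
  unfold H₅
  rw [← mul_assoc] at hA
  nlinarith [rpow_pos_of_pos hq (-2), rpow_pos_of_pos hq (-(2*t))]

lemma H_zero (ht : 0 < t) : H a t 0 = -a := by
  simp [H, zero_rpow ht.ne']; ring

lemma continuous_H (ht : 0 ≤ t) : Continuous (H a t) := by
  unfold H; fun_prop (disch := exact ht)

lemma sub_one_mul_rpow_sub_one_nonneg (hq : 0 ≤ q) (ht : 0 < t) : 0 ≤ (q - 1) * (q ^ t - 1) := by
  rcases le_total q 1 with hq1 | hq1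
  · exact mul_nonneg_of_nonpos_of_nonpos (by linarith) (by linarith [rpow_le_one hq hq1 ht.le])
  · exact mul_nonneg (by linarith) (by linarith [one_le_rpow hq1 ht.le])

lemma eq_iff_sq_eq_of_mul_nonneg {x y : ℝ} (h : 0 ≤ x * y) : x = y ↔ x ^ 2 = y ^ 2 := by
  refine ⟨fun hxy => hxy ▸ rfl, fun h2 => ?_⟩
  rcases sq_eq_sq_iff_eq_or_eq_neg.1 h2 with hxy | hxy
  · exact hxy
  · subst hxy; nlinarith

lemma velocity_eq_iff_H_eq_zero (ha : 0 < a) (ha1 : a < 1) (ht : 0 < t) (hq : 0 < q) :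
    √(1 - a) * (q - 1) / √(q + a) = √(1 - a ^ 2) / a * (q ^ t - 1) ↔ H a t q = 0 := by
  have hqa : 0 < q + a := by linarith
  have hsign : 0 ≤ (√(1 - a) * (q - 1) / √(q + a)) * (√(1 - a ^ 2) / a * (q ^ t - 1)) := by
    rw [show (√(1 - a) * (q - 1) / √(q + a)) * (√(1 - a ^ 2) / a * (q ^ t - 1))
      = √(1 - a) / √(q + a) * (√(1 - a ^ 2) / a) * ((q - 1) * (q ^ t - 1)) by ring]
    exact mul_nonneg (by positivity) (sub_one_mul_rpow_sub_one_nonneg hq.le ht)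
  rw [eq_iff_sq_eq_of_mul_nonneg hsign, div_pow, mul_pow, mul_pow, div_pow,
    sq_sqrt (by linarith), sq_sqrt hqa.le, sq_sqrt (by nlinarith), div_mul_eq_mul_div,
    div_eq_div_iff hqa.ne' (by positivity), ← sub_eq_zero,
    show (1 - a) * (q - 1) ^ 2 * a ^ 2 - (1 - a ^ 2) * (q ^ t - 1) ^ 2 * (q + a)
      = (1 - a) * H a t q by unfold H; ring, mul_eq_zero, or_iff_right (by linarith)]

lemma alpha_eq_zero_iff (ha : 0 < a) (ha1 : a < 1) (ht : 0 < t) (hq : 0 < q) :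
    (if q ≤ 1 then √(1 - a) * (q - 1) / √(q + a) else √(1 - a ^ 2) / a * (q ^ t - 1)) -
        (if q ≤ 1 then √(1 - a ^ 2) / a * (q ^ t - 1) else √(1 - a) * (q - 1) / √(q + a)) = 0 ↔
      H a t q = 0 := by
  rw [← velocity_eq_iff_H_eq_zero ha ha1 ht hq]
  split_ifs
  · exact sub_eq_zero
  · exact sub_eq_zero.trans eq_comm

lemma strictMonoOn_H₄ (ha : 0 < a) (ha1 : a < 1) : StrictMonoOn (H₄ a (a / (1 + a))) (Ioi 0) := by
  have ht : a / (1 + a) < 1 / 2 := by rw [div_lt_iff₀ (by positivity)]; linarith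
  refine strictMonoOn_of_rpow_mul_deriv (fun _ hq => hasDerivAt_H₄ hq) (convex_Ioi 0) subset_rfl
    fun x hx => H₅_pos ha (by positivity) ht ?_
  rwa [interior_Ioi] at hx

lemma H_pos_of_one_lt (ha : 0 < a) (ha14 : a < 1 / 4) :
    ∀ x, 1 < x → 0 < H a (a / (1 + a)) x := by
  have h₄ : ∀ x, 1 < x → 0 < H₄ a (a / (1 + a)) x := fun x hx =>
    (H₄_one_pos ha ha14).trans <|
      strictMonoOn_H₄ ha (by linarith) (mem_Ioi.2 one_pos) (mem_Ioi.2 (one_pos.trans hx)) hx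
  have h₃ := pos_of_one_lt_of_rpow_mul_deriv (fun _ hq => hasDerivAt_H₃ hq) (H₃_one ha) h₄
  have h₂ := pos_of_one_lt_of_rpow_mul_deriv (fun _ hq => hasDerivAt_H₂ hq) (H₂_one ha) h₃
  have h₁ := pos_of_one_lt_of_rpow_mul_deriv (fun _ hq => hasDerivAt_H₁ hq) H₁_one h₂
  exact pos_of_one_lt_of_rpow_mul_deriv (fun _ hq => hasDerivAt_H hq) H_one h₁

lemma exists_H_pos_left_of_one (ha : 0 < a) (ha14 : a < 1 / 4) :
    ∃ c ∈ Ioo 0 1, ∀ x ∈ Ioo c 1, 0 < H a (a / (1 + a)) x := by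
  have hev : ∀ᶠ x in 𝓝 1, 0 < H₄ a (a / (1 + a)) x :=
    (hasDerivAt_H₄ one_pos).continuousAt.eventually (lt_mem_nhds (H₄_one_pos ha ha14))
  obtain ⟨c, hc, h₄⟩ := (mem_nhdsLT_iff_exists_mem_Ico_Ioo_subset (by norm_num : (1 / 2 : ℝ) < 1)).1
    (nhdsWithin_le_nhds hev)
  have hc0 : 0 < c := by linarith [hc.1]
  have h₃ := neg_of_mem_Ioo_of_rpow_mul_deriv (fun _ hq => hasDerivAt_H₃ hq) hc0 (H₃_one ha) h₄
  have h₂ := pos_of_mem_Ioo_of_rpow_mul_deriv (fun _ hq => hasDerivAt_H₂ hq) hc0 (H₂_one ha) h₃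
  have h₁ := neg_of_mem_Ioo_of_rpow_mul_deriv (fun _ hq => hasDerivAt_H₁ hq) hc0 H₁_one h₂
  exact ⟨c, ⟨hc0, hc.2⟩,
    pos_of_mem_Ioo_of_rpow_mul_deriv (fun _ hq => hasDerivAt_H hq) hc0 H_one h₁⟩

lemma exists_H_eq_zero (ha : 0 < a) (ha14 : a < 1 / 4) :
    ∃ y ∈ Ioo 0 1, H a (a / (1 + a)) y = 0 := by
  obtain ⟨c, hc, hpos⟩ := exists_H_pos_left_of_one ha ha14
  have hw : (c + 1) / 2 ∈ Ioo c 1 := ⟨by linarith [hc.2], by linarith [hc.2]⟩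
  obtain ⟨y, hy, hHy⟩ := intermediate_value_Ioo (by linarith [hc.1] : 0 ≤ (c + 1) / 2)
    (continuous_H (by positivity)).continuousOn
    ⟨by rw [H_zero (by positivity)]; linarith, hpos _ hw⟩
  exact ⟨y, ⟨hy.1, hy.2.trans hw.2⟩, hHy⟩

lemma subsingleton_zeros_H (ha : 0 < a) (ha14 : a < 1 / 4) :
    {x ∈ Ioo (0 : ℝ) 1 | H a (a / (1 + a)) x = 0}.Subsingleton := by
  have h₄ : {x ∈ Ioo (0 : ℝ) 1 | H₄ a (a / (1 + a)) x = 0}.Subsingleton := fun x hx y hy =>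
    (strictMonoOn_H₄ ha (by linarith)).injOn
      hx.1.1 hy.1.1 (hx.2.trans hy.2.symm)
  have h₃ := subsingleton_zeros_of_rpow_mul_deriv (fun _ hq => hasDerivAt_H₃ hq) (H₃_one ha) h₄
  have h₂ := subsingleton_zeros_of_rpow_mul_deriv (fun _ hq => hasDerivAt_H₂ hq) (H₂_one ha) h₃
  have h₁ := subsingleton_zeros_of_rpow_mul_deriv (fun _ hq => hasDerivAt_H₁ hq) H₁_one h₂
  exact subsingleton_zeros_of_rpow_mul_deriv (fun _ hq => hasDerivAt_H hq) H_one h₁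

end TransitionCurves

open TransitionCurves

theorem alpha_two_roots (a : ℝ) (ha : 0 < a) (ha14 : a < 1 / 4) :
    ∃ y₀ : ℝ, y₀ ∈ Set.Ioo (0 : ℝ) 1 ∧
      (let ζ : ℝ := a / (1 + a)
       let κ : ℝ := Real.sqrt (1 - a)
       let ν : ℝ := Real.sqrt (1 - a ^ 2) / a
       let α : ℝ → ℝ := fun q =>
         (if q ≤ 1 then κ * (q - 1) / Real.sqrt (q + a) else ν * (q ^ ζ - 1)) -
           (if q ≤ 1 then ν * (q ^ ζ - 1) else κ * (q - 1) / Real.sqrt (q + a))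
       α y₀ = 0 ∧ α 1 = 0 ∧ ∀ q : ℝ, 0 < q → α q = 0 → q = 1 ∨ q = y₀) := by
  obtain ⟨y₀, hy₀, hHy₀⟩ := exists_H_eq_zero ha ha14
  have hα := fun q (hq : 0 < q) =>
    alpha_eq_zero_iff (t := a / (1 + a)) ha (by linarith) (by positivity) hq
  refine ⟨y₀, hy₀, (hα y₀ hy₀.1).2 hHy₀, (hα 1 one_pos).2 H_one, fun q hq hαq => ?_⟩
  rcases lt_trichotomy q 1 with hq1 | rfl | hq1
  · exact Or.inr (subsingleton_zeros_H ha ha14 ⟨⟨hq, hq1⟩, (hα q hq).1 hαq⟩ ⟨hy₀, hHy₀⟩)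
  · exact Or.inl rfl
  · exact absurd ((hα q hq).1 hαq) (H_pos_of_one_lt ha ha14 q hq1).ne'
end

section
/- Let a ∈ (0,1), ζ = a/(1+a), ν = sqrt(1−a^2)/a, κ = sqrt(1−a). For each x > 1 define V(x) = [½(1 − v(x)/ν)]^{1/ζ} where v(x) = (ν*sqrt(x+a) + κ*(x−1))/sqrt(x + a*x^2). Then V is strictly increasing on (1, ∞), V(x) → 0 as x → 1⁺, and V(x) → [½(1 − sqrt(ζ))]^{1/ζ} as x → ∞, and this limit lies strictly between 0 and 1. -/
/-!
Write `v = N / g` with `N x = ν √(x + a) + κ (x - 1)` and `g x = √(x + a x²)`. Then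
`2 √(x + a) g³ v' = κ √(x + a) ((1 + 2a) x + 1) - ν a (x² + 2a x + 1)`, and this is negative
for `x > 1`: since `ν a = √(1 - a²)`, the difference of the squares of the two terms is
`(1 - a) (x - 1)² ((1 + a) x² + (1 + 2a) x + 1) > 0`. Hence `v` decreases from `v 1 = ν`, so
`V = (½ (1 - v / ν)) ^ (1 / ζ)` increases from `0`. At infinity, `t = 1 / x` turns `v` into
`(ν √(t + a t²) + κ (1 - t)) / √(t + a)`, continuous at `t = 0` with value `κ / √a = ν √ζ`.
-/

open Real Filter Set Topology

namespace VacuumThreshold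

noncomputable def ζ (a : ℝ) : ℝ := a / (1 + a)

noncomputable def ν (a : ℝ) : ℝ := √(1 - a ^ 2) / a

noncomputable def κ (a : ℝ) : ℝ := √(1 - a)

noncomputable def v (a x : ℝ) : ℝ := (ν a * √(x + a) + κ a * (x - 1)) / √(x + a * x ^ 2)

noncomputable def V (a x : ℝ) : ℝ := (1 / 2 * (1 - v a x / ν a)) ^ (1 / ζ a)

variable {a : ℝ}

lemma ζ_pos (ha : 0 < a) : 0 < ζ a := by
  unfold ζ; positivity

lemma sqrt_ζ_lt_one (ha : 0 < a) : √(ζ a) < 1 := by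
  rw [sqrt_lt' one_pos, one_pow, ζ, div_lt_one (by linarith)]
  linarith

lemma ν_pos (ha : 0 < a) (ha1 : a < 1) : 0 < ν a :=
  div_pos (sqrt_pos.2 (by nlinarith)) ha

lemma ν_mul_eq_sqrt (ha : 0 < a) : ν a * a = √(1 - a ^ 2) := by
  unfold ν; field_simp

lemma κ_div_sqrt_eq (ha : 0 < a) (ha1 : a < 1) : κ a / √a = ν a * √(ζ a) := by
  have hl : 0 ≤ κ a / √a := by unfold κ; positivity
  have hr : 0 ≤ ν a * √(ζ a) := by unfold ν ζ; positivity
  refine (pow_left_inj₀ hl hr two_ne_zero).1 ?_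
  rw [div_pow, mul_pow, κ, ν, ζ, div_pow, sq_sqrt (by linarith), sq_sqrt ha.le,
    sq_sqrt (by nlinarith), sq_sqrt (by positivity)]
  field_simp
  ring

lemma v_one (ha : 0 < a) : v a 1 = ν a := by
  have : √(1 + a) ≠ 0 := (sqrt_pos.2 (by linarith)).ne'
  simp [v, this]

lemma continuousOn_v (ha : 0 ≤ a) : ContinuousOn (v a) (Ici 1) := by
  refine ContinuousOn.div (by fun_prop) (by fun_prop) fun x (hx : 1 ≤ x) => ?_
  exact (sqrt_pos.2 (by positivity)).ne'

lemma tendsto_v_nhdsGT_one (ha : 0 < a) : Tendsto (v a) (𝓝[>] 1) (𝓝 (ν a)) := by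
  rw [← v_one ha]
  exact ((continuousOn_v ha.le).continuousWithinAt self_mem_Ici).mono Ioi_subset_Ici_self

lemma hasDerivAt_v (ha : 0 < a) {x : ℝ} (hx : 0 < x) :
    HasDerivAt (v a)
      ((κ a * √(x + a) * ((1 + 2 * a) * x + 1) - ν a * a * (x ^ 2 + 2 * a * x + 1)) /
        (2 * √(x + a) * √(x + a * x ^ 2) ^ 3)) x := by
  have hs : 0 < x + a := by positivity
  have hg : 0 < x + a * x ^ 2 := by positivity
  have hN : HasDerivAt (fun y => ν a * √(y + a) + κ a * (y - 1))
      (ν a * (1 / (2 * √(x + a))) + κ a * 1) x :=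
    ((((hasDerivAt_id x).add_const a).sqrt hs.ne').const_mul _).add
      (((hasDerivAt_id x).sub_const 1).const_mul _)
  have hD : HasDerivAt (fun y => √(y + a * y ^ 2))
      ((1 + a * (2 * x)) / (2 * √(x + a * x ^ 2))) x := by
    simpa using ((hasDerivAt_id x).add ((hasDerivAt_pow 2 x).const_mul a)).sqrt hg.ne'
  refine (hN.div hD (sqrt_pos.2 hg).ne').congr_deriv ?_
  have hs2 := sq_sqrt hs.le
  have hg2 := sq_sqrt hg.le
  have hs_pos := sqrt_pos.2 hs
  have hg_pos := sqrt_pos.2 hg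
  generalize √(x + a) = s at *
  generalize √(x + a * x ^ 2) = g at *
  field_simp
  linear_combination (-(ν a * (1 + 2 * a * x))) * hs2 + (ν a + 2 * κ a * s) * hg2

lemma v_deriv_numerator_neg (ha : 0 < a) (ha1 : a < 1) {x : ℝ} (hx : 1 < x) :
    κ a * √(x + a) * ((1 + 2 * a) * x + 1) - ν a * a * (x ^ 2 + 2 * a * x + 1) < 0 := by
  rw [sub_neg, ν_mul_eq_sqrt ha]
  refine lt_of_pow_lt_pow_left₀ 2 (by positivity) ?_
  rw [mul_pow, mul_pow, mul_pow, κ, sq_sqrt (by linarith), sq_sqrt (by linarith),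
    sq_sqrt (by nlinarith), ← sub_pos]
  have hgap : 0 < (1 - a) * ((x - 1) ^ 2 * ((1 + a) * x ^ 2 + (1 + 2 * a) * x + 1)) :=
    mul_pos (by linarith) (mul_pos (by nlinarith) (by positivity))
  linear_combination hgap

lemma strictAntiOn_v (ha : 0 < a) (ha1 : a < 1) : StrictAntiOn (v a) (Ici 1) := by
  refine strictAntiOn_of_hasDerivWithinAt_neg (convex_Ici 1) (continuousOn_v ha.le)
    (fun x hx => (hasDerivAt_v ha ?_).hasDerivWithinAt) (fun x hx => ?_) <;>
    rw [interior_Ici, mem_Ioi] at hx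
  · linarith
  · exact div_neg_of_neg_of_pos (v_deriv_numerator_neg ha ha1 hx) (by positivity)

lemma v_eq_comp_inv (ha : 0 ≤ a) {x : ℝ} (hx : 0 < x) :
    v a x = (ν a * √(x⁻¹ + a * x⁻¹ ^ 2) + κ a * (1 - x⁻¹)) / √(x⁻¹ + a) := by
  have hsqrt_mul (y : ℝ) : √(x ^ 2 * y) = x * √y := by
    rw [sqrt_mul (sq_nonneg x), sqrt_sq hx.le]
  have h1 : x + a = x ^ 2 * (x⁻¹ + a * x⁻¹ ^ 2) := by field_simp
  have h2 : x + a * x ^ 2 = x ^ 2 * (x⁻¹ + a) := by field_simp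
  rw [v, h1, h2, hsqrt_mul, hsqrt_mul]
  field_simp

lemma tendsto_v_atTop (ha : 0 < a) (ha1 : a < 1) :
    Tendsto (v a) atTop (𝓝 (ν a * √(ζ a))) := by
  have hcont : ContinuousAt
      (fun t => (ν a * √(t + a * t ^ 2) + κ a * (1 - t)) / √(t + a)) 0 :=
    ContinuousAt.div (by fun_prop) (by fun_prop) (by rw [zero_add]; exact (sqrt_pos.2 ha).ne')
  have hval : (ν a * √(0 + a * 0 ^ 2) + κ a * (1 - 0)) / √(0 + a) = ν a * √(ζ a) := by
    simpa using κ_div_sqrt_eq ha ha1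
  rw [← hval]
  refine (hcont.tendsto.comp tendsto_inv_atTop_zero).congr' ?_
  filter_upwards [eventually_gt_atTop 0] with x hx
  exact (v_eq_comp_inv ha.le hx).symm

lemma tendsto_V_of_tendsto_v (ha : 0 < a) {l : Filter ℝ} {L : ℝ} (h : Tendsto (v a) l (𝓝 L)) :
    Tendsto (V a) l (𝓝 ((1 / 2 * (1 - L / ν a)) ^ (1 / ζ a))) :=
  ((tendsto_const_nhds.sub (h.div_const _)).const_mul _).rpow_const
    (Or.inr (one_div_pos.2 (ζ_pos ha)).le)

lemma strictMonoOn_V (ha : 0 < a) (ha1 : a < 1) : StrictMonoOn (V a) (Ioi 1) := by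
  intro x (hx : 1 < x) y (hy : 1 < y) hxy
  have hν := ν_pos ha ha1
  have hvx : v a x < ν a := v_one ha ▸ strictAntiOn_v ha ha1 self_mem_Ici hx.le hx
  have hvyx : v a y < v a x := strictAntiOn_v ha ha1 hx.le hy.le hxy
  refine rpow_lt_rpow ?_ ?_ (one_div_pos.2 (ζ_pos ha))
  · linarith [(div_lt_one hν).2 hvx]
  · linarith [div_lt_div_of_pos_right hvyx hν]

end VacuumThreshold

open VacuumThreshold in
theorem V_properties (a : ℝ) (ha : 0 < a) (ha1 : a < 1) :
    (StrictMonoOn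
        (fun x : ℝ =>
          (1 / 2 * (1 -
              ((Real.sqrt (1 - a ^ 2) / a * Real.sqrt (x + a) +
                  Real.sqrt (1 - a) * (x - 1)) / Real.sqrt (x + a * x ^ 2)) /
                (Real.sqrt (1 - a ^ 2) / a))) ^ (1 / (a / (1 + a))))
        (Set.Ioi 1)) ∧
    Filter.Tendsto
      (fun x : ℝ =>
        (1 / 2 * (1 -
            ((Real.sqrt (1 - a ^ 2) / a * Real.sqrt (x + a) +
                Real.sqrt (1 - a) * (x - 1)) / Real.sqrt (x + a * x ^ 2)) /
              (Real.sqrt (1 - a ^ 2) / a))) ^ (1 / (a / (1 + a))))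
      (nhdsWithin 1 (Set.Ioi 1)) (nhds 0) ∧
    Filter.Tendsto
      (fun x : ℝ =>
        (1 / 2 * (1 -
            ((Real.sqrt (1 - a ^ 2) / a * Real.sqrt (x + a) +
                Real.sqrt (1 - a) * (x - 1)) / Real.sqrt (x + a * x ^ 2)) /
              (Real.sqrt (1 - a ^ 2) / a))) ^ (1 / (a / (1 + a))))
      Filter.atTop
      (nhds ((1 / 2 * (1 - Real.sqrt (a / (1 + a)))) ^ (1 / (a / (1 + a))))) ∧
    0 < (1 / 2 * (1 - Real.sqrt (a / (1 + a)))) ^ (1 / (a / (1 + a))) ∧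
    (1 / 2 * (1 - Real.sqrt (a / (1 + a)))) ^ (1 / (a / (1 + a))) < 1 := by
  have hν := ν_pos ha ha1
  have hE : 0 < 1 / ζ a := one_div_pos.2 (ζ_pos ha)
  have hbase : 0 < 1 / 2 * (1 - √(ζ a)) := by linarith [sqrt_ζ_lt_one ha]
  have hbase1 : 1 / 2 * (1 - √(ζ a)) < 1 := by linarith [sqrt_nonneg (ζ a)]
  refine ⟨strictMonoOn_V ha ha1, ?_, ?_, rpow_pos_of_pos hbase _,
    rpow_lt_one hbase.le hbase1 hE⟩
  · have h := tendsto_V_of_tendsto_v ha (tendsto_v_nhdsGT_one ha)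
    rwa [div_self hν.ne', sub_self, mul_zero, zero_rpow hE.ne'] at h
  · have h := tendsto_V_of_tendsto_v ha (tendsto_v_atTop ha ha1)
    rwa [mul_div_cancel_left₀ _ hν.ne'] at h
end
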